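/- arXiv:2110.03015 — 2 statements merged into one kernel-verified Lean document; each statement's English description precedes it below -/
import Mathlib

section
/- Let 𝒜 be an m-order n-dimensional strong M-tensor with a_{ii…i} = 1 for all i, let 1 ≤ s,k ≤ n−1, let α_i ∈ [0,1], β_j ∈ [0,1], and assume the diagonal matrix I − D_α − D_β has positive diagonal entries. If 0 < ω₁ < ω₂ ≤ 1, then the spectral radii of the preconditioned SOR iteration tensors satisfy ρ(ℋ_{αβ}(ω₂)) ≤ ρ(ℋ_{αβ}(ω₁)) < 1. -/
open scoped BigOperators

namespace MultilinearPaper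

noncomputable section

/-- An `m`-order `n`-dimensional real tensor: the first index is separated and
the remaining `m - 1` indices are given as a function `Fin (m-1) → Fin n`. -/
abbrev Tensor (m n : ℕ) : Type := Fin n → (Fin (m - 1) → Fin n) → ℝ

variable {m n : ℕ}

/-- The vector `𝒜 x^{m-1}` (real version):
`(𝒜 x^{m-1})_i = ∑_{i₂,…,i_m} a_{i i₂ … i_m} x_{i₂} ⋯ x_{i_m}`. -/
def tmul (A : Tensor m n) (x : Fin n → ℝ) : Fin n → ℝ :=
  fun i => ∑ f : Fin (m - 1) → Fin n, A i f * ∏ t, x (f t)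

/-- The vector `𝒜 x^{m-1}` evaluated at a complex vector. -/
def tmulC (A : Tensor m n) (x : Fin n → ℂ) : Fin n → ℂ :=
  fun i => ∑ f : Fin (m - 1) → Fin n, (A i f : ℂ) * ∏ t, x (f t)

/-- The identity tensor `𝓘`. -/
def idT (m n : ℕ) : Tensor m n :=
  fun i f => if ∀ t, f t = i then 1 else 0

/-- Entrywise nonnegativity of a tensor. -/
def TNonneg (A : Tensor m n) : Prop := ∀ i f, 0 ≤ A i f

/-- `lam` is an eigenvalue of `A`: there is `x ≠ 0` over `ℂ` with
`𝒜 x^{m-1} = lam • x^{[m-1]}`. -/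
def IsEigenvalue (A : Tensor m n) (lam : ℂ) : Prop :=
  ∃ x : Fin n → ℂ, x ≠ 0 ∧ ∀ i, tmulC A x i = lam * (x i) ^ (m - 1)

/-- Spectral radius: supremum of moduli of eigenvalues. -/
def rho (A : Tensor m n) : ℝ :=
  sSup {r : ℝ | ∃ lam : ℂ, IsEigenvalue A lam ∧ r = ‖lam‖}

/-- `A` is a strong M-tensor: `A = η 𝓘 - B` with `B ≥ 0` and `η > ρ(B)`. -/
def StrongM (A : Tensor m n) : Prop :=
  ∃ (η : ℝ) (B : Tensor m n), TNonneg B ∧ rho B < η ∧ A = η • idT m n - B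

/-- Matrix–tensor product `(P𝓑)_{j i₂…i_m} = ∑_{j₂} P_{j j₂} b_{j₂ i₂ … i_m}`. -/
def mmul (P : Matrix (Fin n) (Fin n) ℝ) (A : Tensor m n) : Tensor m n :=
  fun j f => ∑ j₂, P j j₂ * A j₂ f

/-- Majorization matrix `M(𝒜)_{ij} = a_{i j … j}`. -/
def maj (A : Tensor m n) : Matrix (Fin n) (Fin n) ℝ :=
  fun i j => A i (fun _ => j)

/-- `a_{i i … i} = 1` for all `i`. -/
def UnitDiag (A : Tensor m n) : Prop := ∀ i, A i (fun _ => i) = 1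

/-- `L`: the negatives of the strictly lower triangular entries of `M(𝒜)`. -/
def Lmat (A : Tensor m n) : Matrix (Fin n) (Fin n) ℝ :=
  fun i j => if (j : ℕ) < (i : ℕ) then -maj A i j else 0

/-- `𝓛 = L𝓘`. -/
def Ltens (A : Tensor m n) : Tensor m n := mmul (Lmat A) (idT m n)

/-- `𝓕 = 𝓘 - 𝓛 - 𝒜`. -/
def Ftens (A : Tensor m n) : Tensor m n := idT m n - Ltens A - A

/-- The matrix `S_α^s`, with `(S_α^s)_{i,i+s} = -α_i a_{i(i+s)…(i+s)}`. -/
def Smat (A : Tensor m n) (α : Fin n → ℝ) (s : ℕ) : Matrix (Fin n) (Fin n) ℝ :=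
  fun i j => if (j : ℕ) = (i : ℕ) + s then -(α i * maj A i j) else 0

/-- The matrix `K_β^k`, with `(K_β^k)_{i,i-k} = -β_i a_{i(i-k)…(i-k)}`. -/
def Kmat (A : Tensor m n) (β : Fin n → ℝ) (k : ℕ) : Matrix (Fin n) (Fin n) ℝ :=
  fun i j => if (i : ℕ) = (j : ℕ) + k then -(β i * maj A i j) else 0

/-- The preconditioner `P_{αβ}(s,k) = I + S_α^s + K_β^k`. -/
def Pmat (A : Tensor m n) (α β : Fin n → ℝ) (s k : ℕ) : Matrix (Fin n) (Fin n) ℝ :=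
  1 + Smat A α s + Kmat A β k

/-- The preconditioned tensor `𝒜_{αβ}(s,k) = P_{αβ}(s,k) 𝒜`. -/
def precond (A : Tensor m n) (α β : Fin n → ℝ) (s k : ℕ) : Tensor m n :=
  mmul (Pmat A α β s k) A

/- Jacobi-type splittings. -/

def E1 (A : Tensor m n) (α β : Fin n → ℝ) (s k : ℕ) : Tensor m n :=
  mmul (Pmat A α β s k) (idT m n)

def F1 (A : Tensor m n) (α β : Fin n → ℝ) (s k : ℕ) : Tensor m n :=
  mmul (Pmat A α β s k) (Ltens A + Ftens A)

def F2 (A : Tensor m n) (α β : Fin n → ℝ) (s k : ℕ) : Tensor m n :=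
  mmul (Pmat A α β s k) (Ltens A + Ftens A) - mmul (Smat A α s + Kmat A β k) (idT m n)

def F3 (A : Tensor m n) (α : Fin n → ℝ) (s : ℕ) : Tensor m n :=
  mmul (1 + Smat A α s) (Ltens A + Ftens A) - mmul (Smat A α s) (idT m n)

def F4 (A : Tensor m n) (β : Fin n → ℝ) (k : ℕ) : Tensor m n :=
  mmul (1 + Kmat A β k) (Ltens A + Ftens A) - mmul (Kmat A β k) (idT m n)

/-- `S`: the matrix `S_α^1` with all parameters equal to `1`. -/
def Sfull (A : Tensor m n) : Matrix (Fin n) (Fin n) ℝ := Smat A (fun _ => 1) 1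

/-- `K`: the matrix `K_β^1` with all parameters equal to `1`. -/
def Kfull (A : Tensor m n) : Matrix (Fin n) (Fin n) ℝ := Kmat A (fun _ => 1) 1

/-- `𝓛′` with `𝓛 = K𝓘 + 𝓛′`. -/
def Lprime (A : Tensor m n) : Tensor m n := Ltens A - mmul (Kfull A) (idT m n)

/-- `𝓕′` with `𝓕 = S𝓘 + 𝓕′`. -/
def Fprime (A : Tensor m n) : Tensor m n := Ftens A - mmul (Sfull A) (idT m n)

/-- `ℰ₅ = (I - S_α K - K_β S)𝓘`. -/
def E5 (A : Tensor m n) (α β : Fin n → ℝ) : Tensor m n :=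
  mmul (1 - Smat A α 1 * Kfull A - Kmat A β 1 * Sfull A) (idT m n)

/-- `ℱ₅ = 𝓛 + 𝓕 - (S_α + K_β)𝓘 + S_α(𝓛′ + 𝓕) + K_β(𝓛 + 𝓕′)`. -/
def F5 (A : Tensor m n) (α β : Fin n → ℝ) : Tensor m n :=
  Ltens A + Ftens A - mmul (Smat A α 1 + Kmat A β 1) (idT m n)
    + mmul (Smat A α 1) (Lprime A + Ftens A) + mmul (Kmat A β 1) (Ltens A + Fprime A)

def finShiftUp (i : Fin n) (s : ℕ) (h : (i : ℕ) + s < n) : Fin n := ⟨(i : ℕ) + s, h⟩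

def finShiftDown (i : Fin n) (k : ℕ) : Fin n :=
  ⟨(i : ℕ) - k, lt_of_le_of_lt (Nat.sub_le _ _) i.isLt⟩

/-- The `i`-th quantity appearing in conditions (7) and (11):
`α_i a_{i(i+k)…(i+k)} a_{(i+k)i…i} + β_i a_{i(i-k)…(i-k)} a_{(i-k)i…i}`,
with each term dropped when its index is out of range. -/
def condExpr (A : Tensor m n) (α β : Fin n → ℝ) (k : ℕ) (i : Fin n) : ℝ :=
  (if h : (i : ℕ) + k < n then
      α i * maj A i (finShiftUp i k h) * maj A (finShiftUp i k h) i
    else 0) +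
  (if k ≤ (i : ℕ) then
      β i * maj A i (finShiftDown i k) * maj A (finShiftDown i k) i
    else 0)

/-- Conditions (7) (for `k = 1`) and (11) (for general `k = s`). -/
def Cond (A : Tensor m n) (α β : Fin n → ℝ) (k : ℕ) : Prop :=
  ∀ i : Fin n, 0 < condExpr A α β k i ∧ condExpr A α β k i < 1

/- Gauss–Seidel-type splittings. -/

/-- The diagonal part of `M(T)` as a matrix. -/
def DmatOf (T : Tensor m n) : Matrix (Fin n) (Fin n) ℝ :=
  fun i j => if i = j then maj T i j else 0

/-- The strictly lower triangular part of `M(T)` as a matrix. -/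
def LmatOf (T : Tensor m n) : Matrix (Fin n) (Fin n) ℝ :=
  fun i j => if (j : ℕ) < (i : ℕ) then maj T i j else 0

/-- `𝓓_α = D_α 𝓘` from `S_α^s 𝓛 = 𝓓_α + 𝓛_α + 𝓕_α`. -/
def Dalpha (A : Tensor m n) (α : Fin n → ℝ) (s : ℕ) : Tensor m n :=
  mmul (DmatOf (mmul (Smat A α s) (Ltens A))) (idT m n)

def Lalpha (A : Tensor m n) (α : Fin n → ℝ) (s : ℕ) : Tensor m n :=
  mmul (LmatOf (mmul (Smat A α s) (Ltens A))) (idT m n)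

def Falpha (A : Tensor m n) (α : Fin n → ℝ) (s : ℕ) : Tensor m n :=
  mmul (Smat A α s) (Ltens A) - Dalpha A α s - Lalpha A α s

/-- `𝓓_β = D_β 𝓘` from `K_β^k 𝓕 = 𝓓_β + 𝓛_β + 𝓕_β`. -/
def Dbeta (A : Tensor m n) (β : Fin n → ℝ) (k : ℕ) : Tensor m n :=
  mmul (DmatOf (mmul (Kmat A β k) (Ftens A))) (idT m n)

def Lbeta (A : Tensor m n) (β : Fin n → ℝ) (k : ℕ) : Tensor m n :=
  mmul (LmatOf (mmul (Kmat A β k) (Ftens A))) (idT m n)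

def Fbeta (A : Tensor m n) (β : Fin n → ℝ) (k : ℕ) : Tensor m n :=
  mmul (Kmat A β k) (Ftens A) - Dbeta A β k - Lbeta A β k

def M1 (A : Tensor m n) (α β : Fin n → ℝ) (s k : ℕ) : Tensor m n :=
  mmul (Pmat A α β s k) (idT m n - Ltens A)

def N1 (A : Tensor m n) (α β : Fin n → ℝ) (s k : ℕ) : Tensor m n :=
  mmul (Pmat A α β s k) (Ftens A)

def M2 (A : Tensor m n) (α β : Fin n → ℝ) (s k : ℕ) : Tensor m n :=
  idT m n - Ltens A + mmul (Kmat A β k) (idT m n) - mmul (Kmat A β k) (Ltens A)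
    - Dalpha A α s - Lalpha A α s - Dbeta A β k - Lbeta A β k

def N2 (A : Tensor m n) (α β : Fin n → ℝ) (s k : ℕ) : Tensor m n :=
  Ftens A - mmul (Smat A α s) (idT m n) + mmul (Smat A α s) (Ftens A)
    + Falpha A α s + Fbeta A β k

def M3 (A : Tensor m n) (α : Fin n → ℝ) (s : ℕ) : Tensor m n :=
  idT m n - Ltens A - Dalpha A α s - Lalpha A α s

def N3 (A : Tensor m n) (α : Fin n → ℝ) (s : ℕ) : Tensor m n :=
  Ftens A - mmul (Smat A α s) (idT m n) + mmul (Smat A α s) (Ftens A) + Falpha A α s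

def M4 (A : Tensor m n) (β : Fin n → ℝ) (k : ℕ) : Tensor m n :=
  mmul (1 + Kmat A β k) (idT m n - Ltens A) - Dbeta A β k - Lbeta A β k

def N4 (A : Tensor m n) (β : Fin n → ℝ) (k : ℕ) : Tensor m n :=
  Ftens A + Fbeta A β k

/- Preconditioned SOR. -/

def Dab (A : Tensor m n) (α β : Fin n → ℝ) (s k : ℕ) : Tensor m n :=
  idT m n - Dalpha A α s - Dbeta A β k

def Lab (A : Tensor m n) (α β : Fin n → ℝ) (s k : ℕ) : Tensor m n :=
  Ltens A - mmul (Kmat A β k) (idT m n) + mmul (Kmat A β k) (Ltens A)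
    + Lalpha A α s + Lbeta A β k

def Fab (A : Tensor m n) (α β : Fin n → ℝ) (s k : ℕ) : Tensor m n :=
  Ftens A - mmul (Smat A α s) (idT m n) + mmul (Smat A α s) (Ftens A)
    + Falpha A α s + Fbeta A β k

def Eomega (A : Tensor m n) (α β : Fin n → ℝ) (s k : ℕ) (ω : ℝ) : Tensor m n :=
  (1 / ω) • (Dab A α β s k - ω • Lab A α β s k)

def Fomega (A : Tensor m n) (α β : Fin n → ℝ) (s k : ℕ) (ω : ℝ) : Tensor m n :=
  (1 / ω) • ((1 - ω) • Dab A α β s k + ω • Fab A α β s k)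

/-- Preconditioned SOR iteration tensor `ℋ_{αβ}(ω)`. -/
def Hsor (A : Tensor m n) (α β : Fin n → ℝ) (s k : ℕ) (ω : ℝ) : Tensor m n :=
  mmul (maj (Eomega A α β s k ω))⁻¹ (Fomega A α β s k ω)

/-- Unpreconditioned SOR iteration tensor `ℋ(ω) = M(𝓘-ω𝓛)^{-1}((1-ω)𝓘+ω𝓕)`. -/
def Hu (A : Tensor m n) (ω : ℝ) : Tensor m n :=
  mmul (maj (idT m n - ω • Ltens A))⁻¹ ((1 - ω) • idT m n + ω • Ftens A)

/-- A tensor is reducible if there is a nonempty proper index subset `I` with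
`a_{i₁ i₂ … i_m} = 0` whenever `i₁ ∈ I` and `i₂, …, i_m ∉ I`. -/
def TReducible (A : Tensor m n) : Prop :=
  ∃ I : Set (Fin n), I.Nonempty ∧ I ≠ Set.univ ∧
    ∀ i f, i ∈ I → (∀ t, f t ∉ I) → A i f = 0

section AuxBasic

variable {m n : ℕ}

lemma tmul_apply (A : Tensor m n) (x : Fin n → ℝ) (i : Fin n) :
    tmul A x i = ∑ f : Fin (m-1) → Fin n, A i f * ∏ t, x (f t) := rfl

lemma tmul_add (A B : Tensor m n) (x : Fin n → ℝ) :
    tmul (A + B) x = tmul A x + tmul B x := by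
  funext i
  simp [tmul, add_mul, Finset.sum_add_distrib]

lemma tmul_sub (A B : Tensor m n) (x : Fin n → ℝ) :
    tmul (A - B) x = tmul A x - tmul B x := by
  funext i
  simp [tmul, sub_mul, Finset.sum_sub_distrib]

lemma tmul_smul (c : ℝ) (A : Tensor m n) (x : Fin n → ℝ) :
    tmul (c • A) x = c • tmul A x := by
  funext i
  simp [tmul, Finset.mul_sum, mul_assoc]

lemma tmul_idT (x : Fin n → ℝ) (i : Fin n) :
    tmul (idT m n) x i = x i ^ (m-1) := by
  have h : ∀ f : Fin (m-1) → Fin n, (∀ t, f t = i) ↔ f = fun _ => i := by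
    intro f; constructor
    · intro h; funext t; exact h t
    · intro h t; rw [h]
  simp only [tmul, idT]
  rw [Finset.sum_congr rfl (fun f _ => by rw [if_congr (h f) rfl rfl, ite_mul, one_mul, zero_mul])]
  rw [Finset.sum_ite_eq' Finset.univ (fun _ => i) (fun f => ∏ t, x (f t))]
  simp [Finset.prod_const]

lemma tmul_mmul (P : Matrix (Fin n) (Fin n) ℝ) (A : Tensor m n) (x : Fin n → ℝ) :
    tmul (mmul P A) x = P.mulVec (tmul A x) := by
  funext i
  simp only [tmul, mmul, Matrix.mulVec, dotProduct, Finset.sum_mul,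
    Finset.mul_sum, mul_assoc]
  exact Finset.sum_comm

lemma tmul_mmul_idT (P : Matrix (Fin n) (Fin n) ℝ) (x : Fin n → ℝ) :
    tmul (mmul P (idT m n)) x = P.mulVec (fun i => x i ^ (m-1)) := by
  rw [tmul_mmul, show tmul (idT m n) x = (fun i => x i ^ (m-1)) from funext (tmul_idT x)]

lemma mmul_add (P : Matrix (Fin n) (Fin n) ℝ) (A B : Tensor m n) :
    mmul P (A + B) = mmul P A + mmul P B := by
  funext i f
  simp [mmul, mul_add, Finset.sum_add_distrib]

lemma mmul_sub (P : Matrix (Fin n) (Fin n) ℝ) (A B : Tensor m n) :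
    mmul P (A - B) = mmul P A - mmul P B := by
  funext i f
  simp [mmul, mul_sub, Finset.sum_sub_distrib]

lemma mmul_addl (P Q : Matrix (Fin n) (Fin n) ℝ) (A : Tensor m n) :
    mmul (P + Q) A = mmul P A + mmul Q A := by
  funext i f
  simp [mmul, add_mul, Finset.sum_add_distrib]

lemma mmul_subl (P Q : Matrix (Fin n) (Fin n) ℝ) (A : Tensor m n) :
    mmul (P - Q) A = mmul P A - mmul Q A := by
  funext i f
  simp [mmul, sub_mul, Finset.sum_sub_distrib]

lemma mmul_one (A : Tensor m n) : mmul (1 : Matrix (Fin n) (Fin n) ℝ) A = A := by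
  funext i f
  simp [mmul, Matrix.one_apply, ite_mul, Finset.sum_ite_eq]

lemma mmul_mmul (P Q : Matrix (Fin n) (Fin n) ℝ) (A : Tensor m n) :
    mmul P (mmul Q A) = mmul (P * Q) A := by
  funext i f
  simp only [mmul, Matrix.mul_apply, Finset.sum_mul, Finset.mul_sum, mul_assoc]
  rw [Finset.sum_comm]

lemma mmul_smull (c : ℝ) (P : Matrix (Fin n) (Fin n) ℝ) (A : Tensor m n) :
    mmul (c • P) A = c • mmul P A := by
  funext i f
  simp [mmul, Finset.mul_sum, mul_assoc]

lemma maj_mmul (P : Matrix (Fin n) (Fin n) ℝ) (A : Tensor m n) :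
    maj (mmul P A) = P * maj A := by
  funext i j
  simp [maj, mmul, Matrix.mul_apply]

lemma maj_add (A B : Tensor m n) : maj (A + B) = maj A + maj B := rfl
lemma maj_sub (A B : Tensor m n) : maj (A - B) = maj A - maj B := rfl
lemma maj_smul (c : ℝ) (A : Tensor m n) : maj (c • A) = c • maj A := rfl

lemma maj_idT (hm : 2 ≤ m) : maj (idT m n) = (1 : Matrix (Fin n) (Fin n) ℝ) := by
  have hp : m - 1 ≠ 0 := by omega
  funext i j
  have : Nonempty (Fin (m-1)) := ⟨⟨0, Nat.pos_of_ne_zero hp⟩⟩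
  simp only [maj, idT, Matrix.one_apply]
  by_cases h : j = i
  · subst h; simp
  · rw [if_neg, if_neg (by exact fun hh => h hh.symm)]
    intro hall
    exact h (hall (Classical.arbitrary _))

lemma idT_nonneg : TNonneg (idT m n) := by
  intro i f
  simp only [idT]
  split <;> norm_num

end AuxBasic

section AuxAnalytic

variable {m n : ℕ}

lemma tmul_nonneg (A : Tensor m n) (hA : TNonneg A) (x : Fin n → ℝ)
    (hx : ∀ i, 0 ≤ x i) (i : Fin n) : 0 ≤ tmul A x i := by
  apply Finset.sum_nonneg
  intro f _
  exact mul_nonneg (hA i f) (Finset.prod_nonneg fun t _ => hx (f t))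

lemma tmul_mono (A : Tensor m n) (hA : TNonneg A) {x y : Fin n → ℝ}
    (hx : ∀ i, 0 ≤ x i) (hxy : ∀ i, x i ≤ y i) (i : Fin n) :
    tmul A x i ≤ tmul A y i := by
  apply Finset.sum_le_sum
  intro f _
  apply mul_le_mul_of_nonneg_left _ (hA i f)
  exact Finset.prod_le_prod (fun t _ => hx (f t)) (fun t _ => hxy (f t))

lemma tmul_smul_vec (A : Tensor m n) (c : ℝ) (x : Fin n → ℝ) (i : Fin n) :
    tmul A (fun j => c * x j) i = c ^ (m-1) * tmul A x i := by
  simp only [tmul, Finset.mul_sum]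
  apply Finset.sum_congr rfl
  intro f _
  rw [Finset.prod_mul_distrib, Finset.prod_const, Finset.card_univ, Fintype.card_fin]
  ring

lemma sum_prod_pow (x : Fin n → ℝ) :
    ∑ f : Fin (m-1) → Fin n, ∏ t, x (f t) = (∑ j, x j) ^ (m-1) := by
  have h1 : (∑ j, x j) ^ (m-1) = ∏ _t : Fin (m-1), (∑ j, x j) := by
    simp [Finset.prod_const, Finset.card_univ]
  rw [h1, Finset.prod_univ_sum]
  simp

lemma tmul_continuous (A : Tensor m n) (i : Fin n) :
    Continuous fun x : Fin n → ℝ => tmul A x i := by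
  apply continuous_finset_sum
  intro f _
  exact continuous_const.mul (continuous_finset_prod _ fun t _ => continuous_apply (f t))

lemma eig_abs_bound (A : Tensor m n) (hA : TNonneg A) {lam : ℂ} (h : IsEigenvalue A lam) :
    ∃ z : Fin n → ℝ, (∀ i, 0 ≤ z i) ∧ z ≠ 0 ∧
      ∀ i, ‖lam‖ * z i ^ (m-1) ≤ tmul A z i := by
  obtain ⟨x, hx0, hx⟩ := h
  refine ⟨fun i => ‖x i‖, fun i => norm_nonneg _, ?_, ?_⟩
  · intro hz
    apply hx0
    funext i
    have := congrFun hz i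
    simpa using this
  · intro i
    have h1 : ‖lam‖ * ‖x i‖ ^ (m-1)
        = ‖tmulC A x i‖ := by
      rw [hx i, norm_mul, norm_pow]
    rw [h1]
    calc ‖tmulC A x i‖
        ≤ ∑ f : Fin (m-1) → Fin n, ‖(A i f : ℂ) * ∏ t, x (f t)‖ :=
          norm_sum_le _ _
      _ = tmul A (fun j => ‖x j‖) i := by
          apply Finset.sum_congr rfl
          intro f _
          rw [norm_mul, norm_prod, Complex.norm_real, Real.norm_eq_abs, abs_of_nonneg (hA i f)]

lemma real_eigen (A : Tensor m n) {lam : ℝ} {x : Fin n → ℝ} (hx0 : x ≠ 0)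
    (h : ∀ i, tmul A x i = lam * x i ^ (m-1)) : IsEigenvalue A (lam : ℂ) := by
  refine ⟨fun i => (x i : ℂ), ?_, ?_⟩
  · intro hz
    apply hx0
    funext i
    have := congrFun hz i
    simpa using this
  · intro i
    have := h i
    simp only [tmulC, tmul] at this ⊢
    rw [show ((lam : ℂ) * (x i : ℂ) ^ (m-1)) = ((lam * x i ^ (m-1) : ℝ) : ℂ) by push_cast; ring,
      ← this]
    push_cast
    rfl

lemma cw_upper (A : Tensor m n) (hA : TNonneg A) {y : Fin n → ℝ} (hy : ∀ i, 0 < y i)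
    {θ : ℝ} (hθ : ∀ i, tmul A y i ≤ θ * y i ^ (m-1)) {lam : ℂ}
    (hlam : IsEigenvalue A lam) : ‖lam‖ ≤ θ := by
  obtain ⟨z, hz0, hzne, hz⟩ := eig_abs_bound A hA hlam
  obtain ⟨j, hj⟩ : ∃ j, z j ≠ 0 := by
    by_contra hcon
    push_neg at hcon
    exact hzne (funext fun j => hcon j)
  obtain ⟨i₀, -, hmax⟩ := Finset.exists_max_image Finset.univ (fun i => z i / y i)
    ⟨j, Finset.mem_univ _⟩
  set c := z i₀ / y i₀ with hc
  have hcpos : 0 < c := by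
    have : 0 < z j / y j := div_pos ((hz0 j).lt_of_ne (Ne.symm hj)) (hy j)
    exact lt_of_lt_of_le this (hmax j (Finset.mem_univ j))
  have hzc : ∀ j, z j ≤ c * y j := fun j =>
    (div_le_iff₀ (hy j)).mp (hmax j (Finset.mem_univ j))
  have hzi : z i₀ = c * y i₀ := by
    rw [hc, div_mul_cancel₀ _ (hy i₀).ne']
  have hpos : 0 < z i₀ ^ (m-1) := by
    rw [hzi]; exact pow_pos (mul_pos hcpos (hy i₀)) _
  have key : ‖lam‖ * z i₀ ^ (m-1) ≤ θ * z i₀ ^ (m-1) := by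
    calc ‖lam‖ * z i₀ ^ (m-1) ≤ tmul A z i₀ := hz i₀
      _ ≤ tmul A (fun j => c * y j) i₀ := tmul_mono A hA hz0 hzc i₀
      _ = c ^ (m-1) * tmul A y i₀ := tmul_smul_vec A c y i₀
      _ ≤ c ^ (m-1) * (θ * y i₀ ^ (m-1)) := by
          apply mul_le_mul_of_nonneg_left (hθ i₀) (pow_nonneg hcpos.le _)
      _ = θ * (c * y i₀) ^ (m-1) := by rw [mul_pow]; ring
      _ = θ * z i₀ ^ (m-1) := by rw [hzi]
  exact le_of_mul_le_mul_right key hpos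

lemma rho_le_of_bound (A : Tensor m n) {θ : ℝ} (hθ0 : 0 ≤ θ)
    (h : ∀ lam : ℂ, IsEigenvalue A lam → ‖lam‖ ≤ θ) : rho A ≤ θ := by
  apply Real.sSup_le _ hθ0
  rintro r ⟨lam, hlam, rfl⟩
  exact h lam hlam

lemma rho_bddAbove (A : Tensor m n) {θ : ℝ}
    (h : ∀ lam : ℂ, IsEigenvalue A lam → ‖lam‖ ≤ θ) :
    BddAbove {r : ℝ | ∃ lam : ℂ, IsEigenvalue A lam ∧ r = ‖lam‖} := by
  refine ⟨θ, ?_⟩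
  rintro r ⟨lam, hlam, rfl⟩
  exact h lam hlam

lemma le_rho (A : Tensor m n) {θ : ℝ} {lam : ℂ}
    (h : ∀ mu : ℂ, IsEigenvalue A mu → ‖mu‖ ≤ θ)
    (hlam : IsEigenvalue A lam) : ‖lam‖ ≤ rho A :=
  le_csSup (rho_bddAbove A h) ⟨lam, hlam, rfl⟩

end AuxAnalytic

section Perron

variable {m n : ℕ}

lemma inv_succ_le_inv_succ {j : ℕ} : ((((j:ℕ)+1):ℝ)+1)⁻¹ ≤ ((j:ℝ)+1)⁻¹ := by
  rw [← one_div, ← one_div]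
  apply one_div_le_one_div_of_le (by positivity)
  push_cast; linarith

lemma perronEps (hm : 2 ≤ m) (hn : 1 ≤ n) (H : Tensor m n) (hH : TNonneg H)
    {ε : ℝ} (hε : 0 < ε) :
    ∃ (ts : ℝ) (y : Fin n → ℝ), 0 ≤ ts ∧ (∀ i, 0 < y i) ∧ (∑ i, y i = 1) ∧
      (∀ i, tmul H y i + ε = ts * y i ^ (m-1)) ∧
      (∀ t (z : Fin n → ℝ), (∀ i, 0 ≤ z i) → z ≠ 0 →
        (∀ i, t * z i ^ (m-1) ≤ tmul H z i) → t ≤ ts) ∧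
      ts ≤ (n:ℝ)^(m-1) * ((∑ i, ∑ f : Fin (m-1) → Fin n, H i f) + ε) := by
  have hp : m - 1 ≠ 0 := by omega
  have hn0 : (0:ℝ) < n := by exact_mod_cast hn
  have hne : Nonempty (Fin n) := ⟨⟨0, hn⟩⟩
  set Heps : Tensor m n := fun i f => H i f + ε with hHeps
  have hHeps_nn : TNonneg Heps := fun i f => by
    have := hH i f; simp only [hHeps]; positivity
  have heps : ∀ (y : Fin n → ℝ) i,
      tmul Heps y i = tmul H y i + ε * (∑ j, y j)^(m-1) := by
    intro y i
    simp only [tmul, hHeps, add_mul, Finset.sum_add_distrib]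
    rw [← sum_prod_pow, Finset.mul_sum]
  have hHle : ∀ (y : Fin n → ℝ), (∀ i, 0 ≤ y i) → ∀ i, tmul H y i ≤ tmul Heps y i := by
    intro y hy i
    apply Finset.sum_le_sum
    intro f _
    apply mul_le_mul_of_nonneg_right _ (Finset.prod_nonneg fun t _ => hy (f t))
    simp [hHeps, hε.le]
  set Tset : Set ℝ := {t | 0 ≤ t ∧ ∃ y : Fin n → ℝ, (∀ i, 0 ≤ y i) ∧ (∑ i, y i = 1) ∧
      ∀ i, t * y i ^ (m-1) ≤ tmul Heps y i} with hTset
  set u : Fin n → ℝ := fun _ => (n:ℝ)⁻¹ with hu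
  have hu0 : ∀ i, (0:ℝ) < u i := fun i => by simp only [hu]; exact inv_pos.mpr hn0
  have hu1 : ∑ i, u i = 1 := by
    simp only [hu, Finset.sum_const, Finset.card_univ, Fintype.card_fin, nsmul_eq_mul]
    rw [mul_inv_cancel₀ hn0.ne']
  have h0T : (0:ℝ) ∈ Tset := by
    refine ⟨le_refl 0, u, fun i => (hu0 i).le, hu1, fun i => ?_⟩
    rw [zero_mul]
    exact tmul_nonneg Heps hHeps_nn u (fun i => (hu0 i).le) i
  have hTne : Tset.Nonempty := ⟨0, h0T⟩
  set total : ℝ := ∑ i, ∑ f : Fin (m-1) → Fin n, H i f with htotal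
  have htotal0 : 0 ≤ total := Finset.sum_nonneg fun i _ =>
    Finset.sum_nonneg fun f _ => hH i f
  set C : ℝ := (n:ℝ)^(m-1) * (total + ε) with hC
  have hub : ∀ t ∈ Tset, t ≤ C := by
    rintro t ⟨ht0, y, hy0, hy1, hy⟩
    have hyle1 : ∀ j, y j ≤ 1 := by
      intro j
      rw [← hy1]
      exact Finset.single_le_sum (fun i _ => hy0 i) (Finset.mem_univ j)
    obtain ⟨i, hi⟩ : ∃ i, (n:ℝ)⁻¹ ≤ y i := by
      by_contra hcon
      push_neg at hcon
      have h2 : (∑ i, y i) < ∑ _i : Fin n, (n:ℝ)⁻¹ :=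
        Finset.sum_lt_sum_of_nonempty Finset.univ_nonempty fun i _ => hcon i
      rw [hy1] at h2
      simp only [Finset.sum_const, Finset.card_univ, Fintype.card_fin, nsmul_eq_mul] at h2
      rw [mul_inv_cancel₀ hn0.ne'] at h2
      exact lt_irrefl 1 h2
    have hti : t * ((n:ℝ)⁻¹)^(m-1) ≤ total + ε := by
      calc t * ((n:ℝ)⁻¹)^(m-1) ≤ t * y i ^ (m-1) := by
            apply mul_le_mul_of_nonneg_left _ ht0
            exact pow_le_pow_left₀ (by positivity) hi _
        _ ≤ tmul Heps y i := hy i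
        _ = tmul H y i + ε := by rw [heps, hy1, one_pow, mul_one]
        _ ≤ total + ε := by
            have h3 : tmul H y i ≤ ∑ f : Fin (m-1) → Fin n, H i f := by
              apply Finset.sum_le_sum
              intro f _
              calc H i f * ∏ t, y (f t) ≤ H i f * 1 := by
                    apply mul_le_mul_of_nonneg_left _ (hH i f)
                    exact Finset.prod_le_one (fun t _ => hy0 (f t)) (fun t _ => hyle1 (f t))
                _ = H i f := mul_one _
            have h4 : (∑ f : Fin (m-1) → Fin n, H i f) ≤ total :=
              Finset.single_le_sum (fun i _ => Finset.sum_nonneg fun f _ => hH i f)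
                (Finset.mem_univ i)
            linarith
    have hpowinv : ((n:ℝ)⁻¹)^(m-1) = ((n:ℝ)^(m-1))⁻¹ := inv_pow _ _
    rw [hpowinv] at hti
    calc t = t * ((n:ℝ)^(m-1))⁻¹ * (n:ℝ)^(m-1) := by
          field_simp
      _ ≤ (total + ε) * (n:ℝ)^(m-1) := by
          apply mul_le_mul_of_nonneg_right hti (by positivity)
      _ = C := by rw [hC]; ring
  have hbdd : BddAbove Tset := ⟨C, hub⟩
  set ts : ℝ := sSup Tset with hts
  have hts0 : 0 ≤ ts := le_csSup hbdd h0T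
  have htsC : ts ≤ C := csSup_le hTne hub
  have hmem : ∀ t (z : Fin n → ℝ), 0 ≤ t → (∀ i, 0 ≤ z i) → (∃ j, 0 < z j) →
      (∀ i, t * z i ^ (m-1) ≤ tmul Heps z i) → t ∈ Tset := by
    rintro t z ht0 hz0 ⟨j, hj⟩ hz
    have hσ : 0 < ∑ i, z i := Finset.sum_pos' (fun i _ => hz0 i) ⟨j, Finset.mem_univ j, hj⟩
    refine ⟨ht0, fun i => (∑ l, z l)⁻¹ * z i, fun i => mul_nonneg (inv_nonneg.mpr hσ.le) (hz0 i), ?_, ?_⟩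
    · rw [← Finset.mul_sum, inv_mul_cancel₀ hσ.ne']
    · intro i
      have h1 : tmul Heps (fun l => (∑ l, z l)⁻¹ * z l) i
          = ((∑ l, z l)⁻¹)^(m-1) * tmul Heps z i := tmul_smul_vec Heps _ z i
      rw [h1, mul_pow]
      calc t * (((∑ l, z l)⁻¹)^(m-1) * z i ^ (m-1))
          = ((∑ l, z l)⁻¹)^(m-1) * (t * z i ^ (m-1)) := by ring
        _ ≤ ((∑ l, z l)⁻¹)^(m-1) * tmul Heps z i := by
            apply mul_le_mul_of_nonneg_left (hz i) (pow_nonneg (inv_nonneg.mpr hσ.le) _)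
  have hcw : ∀ t (z : Fin n → ℝ), (∀ i, 0 ≤ z i) → z ≠ 0 →
      (∀ i, t * z i ^ (m-1) ≤ tmul H z i) → t ≤ ts := by
    intro t z hz0 hzne hz
    rcases le_or_gt t 0 with ht | ht
    · exact ht.trans hts0
    · obtain ⟨j, hj⟩ : ∃ j, 0 < z j := by
        by_contra hcon
        push_neg at hcon
        exact hzne (funext fun j => le_antisymm (hcon j) (hz0 j))
      apply le_csSup hbdd
      exact hmem t z ht.le hz0 ⟨j, hj⟩ (fun i => (hz i).trans (hHle z hz0 i))
  have htspos : 0 < ts := by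
    have hεT : ε ∈ Tset := by
      apply hmem ε u hε.le (fun i => (hu0 i).le) ⟨⟨0, hn⟩, hu0 ⟨0, hn⟩⟩
      intro i
      have h1 : tmul Heps u i = tmul H u i + ε := by rw [heps, hu1, one_pow, mul_one]
      have h2 : u i ^ (m-1) ≤ 1 := by
        apply pow_le_one₀ (hu0 i).le
        simp only [hu]
        rw [← one_div]
        exact div_le_one_of_le₀ (by exact_mod_cast hn) hn0.le
      have h3 : 0 ≤ tmul H u i := tmul_nonneg H hH u (fun i => (hu0 i).le) i
      nlinarith
    exact lt_of_lt_of_le hε (le_csSup hbdd hεT)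
  -- attainment of the supremum via compactness
  obtain ⟨ystar, hyst0, hyst1, hyst⟩ : ∃ y : Fin n → ℝ, (∀ i, 0 ≤ y i) ∧ (∑ i, y i = 1) ∧
      ∀ i, ts * y i ^ (m-1) ≤ tmul Heps y i := by
    set Y : ℕ → Set (Fin n → ℝ) := fun j =>
      {y | (∀ i, 0 ≤ y i) ∧ (∑ i, y i = 1) ∧
        ∀ i, (ts - ((j:ℝ)+1)⁻¹) * y i ^ (m-1) ≤ tmul Heps y i} with hY
    have hYne : ∀ j, (Y j).Nonempty := by
      intro j
      obtain ⟨t, htT, hlt⟩ := exists_lt_of_lt_csSup hTne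
        (show ts - ((j:ℝ)+1)⁻¹ < ts by
          have : (0:ℝ) < ((j:ℝ)+1)⁻¹ := by positivity
          linarith)
      obtain ⟨ht0, y, hy0, hy1, hy⟩ := htT
      refine ⟨y, hy0, hy1, fun i => ?_⟩
      calc (ts - ((j:ℝ)+1)⁻¹) * y i ^ (m-1) ≤ t * y i ^ (m-1) := by
            apply mul_le_mul_of_nonneg_right hlt.le (pow_nonneg (hy0 i) _)
        _ ≤ tmul Heps y i := hy i
    have hYsub : ∀ j, Y (j+1) ⊆ Y j := by
      rintro j y ⟨h1, h2, h3⟩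
      refine ⟨h1, h2, fun i => ?_⟩
      have h4 := h3 i
      have h5 : ((((j:ℕ)+1):ℝ)+1)⁻¹ ≤ ((j:ℝ)+1)⁻¹ := inv_succ_le_inv_succ
      have h6 : (0:ℝ) ≤ y i ^ (m-1) := pow_nonneg (h1 i) _
      push_cast at h4 h5 ⊢
      nlinarith
    have hYclosed : ∀ j, IsClosed (Y j) := by
      intro j
      have hc1 : IsClosed {y : Fin n → ℝ | ∀ i, 0 ≤ y i} := by
        rw [show {y : Fin n → ℝ | ∀ i, 0 ≤ y i} = ⋂ i, {y | 0 ≤ y i} by ext; simp]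
        exact isClosed_iInter fun i => isClosed_le continuous_const (continuous_apply i)
      have hc2 : IsClosed {y : Fin n → ℝ | ∑ i, y i = 1} :=
        isClosed_eq (continuous_finset_sum _ fun i _ => continuous_apply i) continuous_const
      have hc3 : IsClosed {y : Fin n → ℝ |
          ∀ i, (ts - ((j:ℝ)+1)⁻¹) * y i ^ (m-1) ≤ tmul Heps y i} := by
        rw [show {y : Fin n → ℝ | ∀ i, (ts - ((j:ℝ)+1)⁻¹) * y i ^ (m-1) ≤ tmul Heps y i}
          = ⋂ i, {y | (ts - ((j:ℝ)+1)⁻¹) * y i ^ (m-1) ≤ tmul Heps y i} by ext; simp]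
        exact isClosed_iInter fun i => isClosed_le
          (continuous_const.mul ((continuous_apply i).pow _)) (tmul_continuous Heps i)
      exact hc1.inter (hc2.inter hc3)
    have hYcpt : IsCompact (Y 0) := by
      apply IsCompact.of_isClosed_subset (isCompact_Icc (a := (0 : Fin n → ℝ)) (b := 1))
        (hYclosed 0)
      rintro y ⟨h1, h2, -⟩
      rw [Set.mem_Icc]
      constructor
      · intro i; exact h1 i
      · intro i
        have h3 := Finset.single_le_sum (fun i _ => h1 i) (Finset.mem_univ i)
        rw [h2] at h3
        simpa using h3
    obtain ⟨y, hy⟩ := IsCompact.nonempty_iInter_of_sequence_nonempty_isCompact_isClosed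
      Y hYsub hYne hYcpt hYclosed
    simp only [Set.mem_iInter] at hy
    obtain ⟨h1, h2, -⟩ := hy 0
    refine ⟨y, h1, h2, fun i => ?_⟩
    have hj : ∀ j : ℕ, (ts - ((j:ℝ)+1)⁻¹) * y i ^ (m-1) ≤ tmul Heps y i :=
      fun j => (hy j).2.2 i
    have hlim : Filter.Tendsto (fun j : ℕ => (ts - ((j:ℝ)+1)⁻¹) * y i ^ (m-1))
        Filter.atTop (nhds (ts * y i ^ (m-1))) := by
      have h0 : Filter.Tendsto (fun j : ℕ => ((j:ℝ)+1)⁻¹) Filter.atTop (nhds 0) := by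
        simpa [one_div] using tendsto_one_div_add_atTop_nhds_zero_nat (𝕜 := ℝ)
      have := ((tendsto_const_nhds (x := ts)).sub h0).mul
        (tendsto_const_nhds (x := y i ^ (m-1)))
      simpa using this
    exact le_of_tendsto hlim (Filter.Eventually.of_forall hj)
  -- Wielandt: the inequality is an equality, and ystar is positive
  have heq : ∀ i, tmul Heps ystar i = ts * ystar i ^ (m-1) := by
    by_contra hcon
    push_neg at hcon
    obtain ⟨i₀, hi₀⟩ := hcon
    have hstrict : ts * ystar i₀ ^ (m-1) < tmul Heps ystar i₀ :=
      lt_of_le_of_ne (hyst i₀) (Ne.symm hi₀)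
    set w : Fin n → ℝ := fun i => tmul Heps ystar i with hw
    have hwpos : ∀ i, 0 < w i := by
      intro i
      have h1 : tmul Heps ystar i = tmul H ystar i + ε := by
        rw [heps, hyst1, one_pow, mul_one]
      have h2 : 0 ≤ tmul H ystar i := tmul_nonneg H hH ystar hyst0 i
      simp only [hw]; linarith
    set s : ℝ := ts ^ ((m-1:ℕ):ℝ)⁻¹ with hs
    have hspos : 0 < s := Real.rpow_pos_of_pos htspos _
    have hspow : s ^ (m-1) = ts := Real.rpow_inv_natCast_pow hts0 hp
    set y' : Fin n → ℝ := fun i => (w i) ^ ((m-1:ℕ):ℝ)⁻¹ with hy'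
    have hy'pos : ∀ i, 0 < y' i := fun i => Real.rpow_pos_of_pos (hwpos i) _
    have hy'pow : ∀ i, y' i ^ (m-1) = w i := fun i =>
      Real.rpow_inv_natCast_pow (hwpos i).le hp
    have hsy : ∀ i, s * ystar i ≤ y' i := by
      intro i
      have h1 : (s * ystar i) ^ (m-1) ≤ y' i ^ (m-1) := by
        rw [mul_pow, hspow, hy'pow]
        exact hyst i
      exact (pow_le_pow_iff_left₀ (mul_nonneg hspos.le (hyst0 i)) (hy'pos i).le hp).mp h1
    have hsy0 : s * ystar i₀ < y' i₀ := by
      have h1 : (s * ystar i₀) ^ (m-1) < y' i₀ ^ (m-1) := by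
        rw [mul_pow, hspow, hy'pow]
        exact hstrict
      by_contra hcon2
      push_neg at hcon2
      exact absurd (pow_le_pow_left₀ (hy'pos i₀).le hcon2 (m-1)) (not_le.mpr h1)
    have hkey : ∀ i, ts * w i < tmul Heps y' i := by
      intro i
      have h1 : tmul Heps (fun j => s * ystar j) i < tmul Heps y' i := by
        apply Finset.sum_lt_sum
        · intro f _
          apply mul_le_mul_of_nonneg_left _ (hHeps_nn i f)
          apply Finset.prod_le_prod (fun t _ => mul_nonneg hspos.le (hyst0 _))
            (fun t _ => hsy (f t))
        · refine ⟨fun _ => i₀, Finset.mem_univ _, ?_⟩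
          apply mul_lt_mul_of_pos_left _
            (lt_of_lt_of_le hε (by have := hH i (fun _ => i₀); simp only [hHeps]; linarith))
          simp only [Finset.prod_const, Finset.card_univ, Fintype.card_fin]
          exact pow_lt_pow_left₀ hsy0 (mul_nonneg hspos.le (hyst0 i₀)) hp
      have h2 : tmul Heps (fun j => s * ystar j) i = ts * w i := by
        simp only [hw]
        rw [tmul_smul_vec, hspow]
      rw [h2] at h1
      exact h1
    -- build a member of Tset exceeding ts
    obtain ⟨i₁, -, hmin⟩ := Finset.exists_min_image Finset.univ
      (fun i => tmul Heps y' i / y' i ^ (m-1)) ⟨⟨0, hn⟩, Finset.mem_univ _⟩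
    set t' : ℝ := tmul Heps y' i₁ / y' i₁ ^ (m-1) with ht'
    have ht'ts : ts < t' := by
      rw [ht', lt_div_iff₀ (pow_pos (hy'pos i₁) _)]
      have := hkey i₁
      rw [← hy'pow i₁] at this
      linarith
    have ht'T : t' ∈ Tset := by
      apply hmem t' y' (le_trans hts0 ht'ts.le) (fun i => (hy'pos i).le)
        ⟨⟨0, hn⟩, hy'pos ⟨0, hn⟩⟩
      intro i
      exact (le_div_iff₀ (pow_pos (hy'pos i) _)).mp
        (hmin i (Finset.mem_univ i))
    exact absurd (le_csSup hbdd ht'T) (not_le.mpr ht'ts)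
  have hystpos : ∀ i, 0 < ystar i := by
    intro i
    rcases (hyst0 i).lt_or_eq with h | h
    · exact h
    · exfalso
      have h1 : tmul Heps ystar i = tmul H ystar i + ε := by
        rw [heps, hyst1, one_pow, mul_one]
      have h2 : 0 ≤ tmul H ystar i := tmul_nonneg H hH ystar hyst0 i
      have h3 := heq i
      rw [← h, zero_pow hp, mul_zero] at h3
      linarith
  refine ⟨ts, ystar, hts0, hystpos, hyst1, ?_, hcw, htsC⟩
  intro i
  have h1 : tmul Heps ystar i = tmul H ystar i + ε := by
    rw [heps, hyst1, one_pow, mul_one]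
  rw [← h1, heq]

end Perron

section PerronLimit

variable {m n : ℕ}

lemma limitEigen (H : Tensor m n) (r C : ℝ)
    (tk : ℕ → ℝ) (yk : ℕ → Fin n → ℝ)
    (hmem : ∀ k : ℕ, (∀ i, 0 ≤ yk k i) ∧ (∑ i, yk k i = 1) ∧ r ≤ tk k ∧ tk k ≤ C ∧
      (∀ i, tmul H (yk k) i + ((k:ℝ)+1)⁻¹ = tk k * (yk k i) ^ (m-1))) :
    ∃ (lam : ℝ) (x : Fin n → ℝ), r ≤ lam ∧ (∀ i, 0 ≤ x i) ∧ (∑ i, x i = 1) ∧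
      (∀ i, tmul H x i = lam * x i ^ (m-1)) := by
  set Z : ℕ → Set ((Fin n → ℝ) × ℝ) := fun j =>
    {q | (∀ i, 0 ≤ q.1 i) ∧ (∑ i, q.1 i = 1) ∧ r ≤ q.2 ∧ q.2 ≤ C ∧
      ∀ i, |tmul H q.1 i - q.2 * (q.1 i) ^ (m-1)| ≤ ((j:ℝ)+1)⁻¹} with hZ
  have hZne : ∀ j, (Z j).Nonempty := by
    intro j
    obtain ⟨h1, h2, h3, h4, h5⟩ := hmem j
    refine ⟨(yk j, tk j), h1, h2, h3, h4, fun i => ?_⟩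
    have := h5 i
    have heq : tmul H (yk j) i - tk j * (yk j i) ^ (m-1) = -((j:ℝ)+1)⁻¹ := by linarith
    rw [heq, abs_neg, abs_of_nonneg (by positivity)]
  have hZsub : ∀ j, Z (j+1) ⊆ Z j := by
    rintro j q ⟨h1, h2, h3, h4, h5⟩
    refine ⟨h1, h2, h3, h4, fun i => ?_⟩
    refine le_trans (h5 i) ?_
    have := inv_succ_le_inv_succ (j := j)
    push_cast at this ⊢
    linarith
  have hZclosed : ∀ j, IsClosed (Z j) := by
    intro j
    have hc1 : IsClosed {q : (Fin n → ℝ) × ℝ | ∀ i, 0 ≤ q.1 i} := by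
      rw [show {q : (Fin n → ℝ) × ℝ | ∀ i, 0 ≤ q.1 i}
        = ⋂ i, {q : (Fin n → ℝ) × ℝ | 0 ≤ q.1 i} by ext; simp]
      exact isClosed_iInter fun i =>
        isClosed_le continuous_const ((continuous_apply i).comp continuous_fst)
    have hc2 : IsClosed {q : (Fin n → ℝ) × ℝ | ∑ i, q.1 i = 1} :=
      isClosed_eq (continuous_finset_sum _ fun i _ =>
        (continuous_apply i).comp continuous_fst) continuous_const
    have hc3 : IsClosed {q : (Fin n → ℝ) × ℝ | r ≤ q.2} :=
      isClosed_le continuous_const continuous_snd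
    have hc4 : IsClosed {q : (Fin n → ℝ) × ℝ | q.2 ≤ C} :=
      isClosed_le continuous_snd continuous_const
    have hc5 : IsClosed {q : (Fin n → ℝ) × ℝ |
        ∀ i, |tmul H q.1 i - q.2 * (q.1 i) ^ (m-1)| ≤ ((j:ℝ)+1)⁻¹} := by
      rw [show {q : (Fin n → ℝ) × ℝ |
          ∀ i, |tmul H q.1 i - q.2 * (q.1 i) ^ (m-1)| ≤ ((j:ℝ)+1)⁻¹}
        = ⋂ i, {q : (Fin n → ℝ) × ℝ |
          |tmul H q.1 i - q.2 * (q.1 i) ^ (m-1)| ≤ ((j:ℝ)+1)⁻¹} by ext; simp]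
      refine isClosed_iInter fun i => isClosed_le (Continuous.abs ?_) continuous_const
      exact ((tmul_continuous H i).comp continuous_fst).sub
        (continuous_snd.mul (((continuous_apply i).comp continuous_fst).pow _))
    exact hc1.inter (hc2.inter (hc3.inter (hc4.inter hc5)))
  have hZcpt : IsCompact (Z 0) := by
    apply IsCompact.of_isClosed_subset
      ((isCompact_Icc (a := (0 : Fin n → ℝ)) (b := 1)).prod
        (isCompact_Icc (a := r) (b := C))) (hZclosed 0)
    rintro q ⟨h1, h2, h3, h4, -⟩
    refine ⟨Set.mem_Icc.mpr ⟨fun i => h1 i, fun i => ?_⟩, Set.mem_Icc.mpr ⟨h3, h4⟩⟩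
    have h5 := Finset.single_le_sum (fun i _ => h1 i) (Finset.mem_univ i)
    rw [h2] at h5
    simpa using h5
  obtain ⟨q, hq⟩ := IsCompact.nonempty_iInter_of_sequence_nonempty_isCompact_isClosed
    Z hZsub hZne hZcpt hZclosed
  simp only [Set.mem_iInter] at hq
  obtain ⟨h1, h2, h3, -, -⟩ := hq 0
  refine ⟨q.2, q.1, h3, h1, h2, fun i => ?_⟩
  have hj : ∀ j : ℕ, |tmul H q.1 i - q.2 * (q.1 i) ^ (m-1)| ≤ ((j:ℝ)+1)⁻¹ :=
    fun j => (hq j).2.2.2.2 i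
  have h0 : Filter.Tendsto (fun j : ℕ => ((j:ℝ)+1)⁻¹) Filter.atTop (nhds 0) := by
    simpa [one_div] using tendsto_one_div_add_atTop_nhds_zero_nat (𝕜 := ℝ)
  have habs : |tmul H q.1 i - q.2 * (q.1 i) ^ (m-1)| ≤ 0 :=
    ge_of_tendsto h0 (Filter.Eventually.of_forall hj)
  have := abs_nonpos_iff.mp habs
  linarith [this]

lemma perron (hm : 2 ≤ m) (hn : 1 ≤ n) (H : Tensor m n) (hH : TNonneg H) :
    ∃ (lam : ℝ) (x : Fin n → ℝ), 0 ≤ lam ∧ (∀ i, 0 ≤ x i) ∧ x ≠ 0 ∧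
      (∀ i, tmul H x i = lam * x i ^ (m-1)) ∧
      (∀ t (z : Fin n → ℝ), (∀ i, 0 ≤ z i) → z ≠ 0 →
        (∀ i, t * z i ^ (m-1) ≤ tmul H z i) → t ≤ lam) := by
  have hne : Nonempty (Fin n) := ⟨⟨0, hn⟩⟩
  choose ts ys hts0 hpos hsum heqk hcw hub using fun k : ℕ =>
    perronEps hm hn H hH (ε := ((k:ℝ)+1)⁻¹) (by positivity)
  set adm : Set ℝ := {t | ∃ z : Fin n → ℝ, (∀ i, 0 ≤ z i) ∧ z ≠ 0 ∧
    ∀ i, t * z i ^ (m-1) ≤ tmul H z i} with hadm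
  have h0adm : (0:ℝ) ∈ adm := by
    refine ⟨fun _ => 1, fun i => zero_le_one, ?_, fun i => ?_⟩
    · intro hcon
      have := congrFun hcon ⟨0, hn⟩
      norm_num at this
    · rw [zero_mul]
      exact tmul_nonneg H hH _ (fun i => zero_le_one) i
  have hadmne : adm.Nonempty := ⟨0, h0adm⟩
  have hadmbdd : BddAbove adm := by
    refine ⟨ts 0, ?_⟩
    rintro t ⟨z, hz0, hzne, hz⟩
    exact hcw 0 t z hz0 hzne hz
  set σ : ℝ := sSup adm with hσ
  have hσ0 : 0 ≤ σ := le_csSup hadmbdd h0adm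
  have hσle : ∀ k, σ ≤ ts k := by
    intro k
    apply csSup_le hadmne
    rintro t ⟨z, hz0, hzne, hz⟩
    exact hcw k t z hz0 hzne hz
  set C : ℝ := (n:ℝ)^(m-1) * ((∑ i, ∑ f : Fin (m-1) → Fin n, H i f) + 1) with hC
  have hCk : ∀ k, ts k ≤ C := by
    intro k
    refine le_trans (hub k) ?_
    apply mul_le_mul_of_nonneg_left _ (by positivity)
    have h1 : ((k:ℝ)+1)⁻¹ ≤ 1 := by
      rw [← one_div]
      apply div_le_one_of_le₀ (by push_cast; linarith [Nat.cast_nonneg (α := ℝ) k]) (by positivity)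
    linarith
  obtain ⟨lam, x, hrlam, hx0, hxsum, hxeq⟩ := limitEigen H σ C ts ys
    (fun k => ⟨fun i => (hpos k i).le, hsum k, hσle k, hCk k, heqk k⟩)
  have hxne : x ≠ 0 := by
    intro hcon
    rw [hcon] at hxsum
    simp at hxsum
  refine ⟨lam, x, le_trans hσ0 hrlam, hx0, hxne, hxeq, ?_⟩
  rintro t z hz0 hzne hz
  refine le_trans ?_ hrlam
  exact le_csSup hadmbdd ⟨z, hz0, hzne, hz⟩

lemma semipos (hm : 2 ≤ m) (hn : 1 ≤ n) {A : Tensor m n} (hA : StrongM A) :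
    ∃ y : Fin n → ℝ, (∀ i, 0 < y i) ∧ (∀ i, 0 < tmul A y i) := by
  have hp : m - 1 ≠ 0 := by omega
  have hne : Nonempty (Fin n) := ⟨⟨0, hn⟩⟩
  obtain ⟨η, B, hB, hρ, hAeq⟩ := hA
  have hAt : ∀ (y : Fin n → ℝ) i, tmul A y i = η * y i ^ (m-1) - tmul B y i := by
    intro y i
    rw [hAeq, tmul_sub, tmul_smul]
    simp only [Pi.sub_apply, Pi.smul_apply, smul_eq_mul]
    rw [tmul_idT]
  choose ts ys hts0 hpos hsum heqk hcw hub using fun k : ℕ =>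
    perronEps hm hn B hB (ε := ((k:ℝ)+1)⁻¹) (by positivity)
  by_cases hcase : ∃ k, ts k < η
  · obtain ⟨k, hk⟩ := hcase
    refine ⟨ys k, hpos k, fun i => ?_⟩
    rw [hAt]
    have h1 := heqk k i
    have h2 : (0:ℝ) < ((k:ℝ)+1)⁻¹ := by positivity
    have h3 : 0 < ys k i ^ (m-1) := pow_pos (hpos k i) _
    nlinarith
  · push_neg at hcase
    exfalso
    set C : ℝ := (n:ℝ)^(m-1) * ((∑ i, ∑ f : Fin (m-1) → Fin n, B i f) + 1) with hC
    have hCk : ∀ k, ts k ≤ C := by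
      intro k
      refine le_trans (hub k) ?_
      apply mul_le_mul_of_nonneg_left _ (by positivity)
      have h1 : ((k:ℝ)+1)⁻¹ ≤ 1 := by
        rw [← one_div]
        apply div_le_one_of_le₀ (by push_cast; linarith [Nat.cast_nonneg (α := ℝ) k])
          (by positivity)
      linarith
    obtain ⟨lam, x, hrlam, hx0, hxsum, hxeq⟩ := limitEigen B (max η 0) C ts ys
      (fun k => ⟨fun i => (hpos k i).le, hsum k, max_le (hcase k) (hts0 k), hCk k, heqk k⟩)
    have hxne : x ≠ 0 := by
      intro hcon
      rw [hcon] at hxsum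
      simp at hxsum
    have heig : IsEigenvalue B (lam : ℂ) := real_eigen B hxne hxeq
    -- bound all eigenvalues of B by θB
    set ones : Fin n → ℝ := fun _ => 1 with hones
    obtain ⟨i₂, -, hmax⟩ := Finset.exists_max_image Finset.univ
      (fun i => tmul B ones i) ⟨⟨0, hn⟩, Finset.mem_univ _⟩
    set θB : ℝ := tmul B ones i₂ with hθB
    have hbnd : ∀ mu : ℂ, IsEigenvalue B mu → ‖mu‖ ≤ θB := by
      intro mu hmu
      apply cw_upper B hB (y := ones) (fun i => zero_lt_one) _ hmu
      intro i
      rw [hones]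
      simpa using hmax i (Finset.mem_univ i)
    have hrho : ‖(lam:ℂ)‖ ≤ rho B := le_rho B hbnd heig
    have hlam0 : 0 ≤ lam := le_trans (le_max_right _ _) hrlam
    have hlamη : η ≤ lam := le_trans (le_max_left _ _) hrlam
    rw [Complex.norm_real, Real.norm_eq_abs, abs_of_nonneg hlam0] at hrho
    linarith

end PerronLimit

section MatrixAux

variable {n : ℕ}

def SLow (M : Matrix (Fin n) (Fin n) ℝ) : Prop :=
  ∀ i j : Fin n, ¬((j:ℕ) < (i:ℕ)) → M i j = 0

def MNonneg (M : Matrix (Fin n) (Fin n) ℝ) : Prop := ∀ i j, 0 ≤ M i j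

lemma MNonneg.mul {M N : Matrix (Fin n) (Fin n) ℝ} (hM : MNonneg M) (hN : MNonneg N) :
    MNonneg (M * N) := fun i j => by
  rw [Matrix.mul_apply]
  exact Finset.sum_nonneg fun l _ => mul_nonneg (hM i l) (hN l j)

lemma MNonneg.add {M N : Matrix (Fin n) (Fin n) ℝ} (hM : MNonneg M) (hN : MNonneg N) :
    MNonneg (M + N) := fun i j => add_nonneg (hM i j) (hN i j)

lemma MNonneg.pow {M : Matrix (Fin n) (Fin n) ℝ} (hM : MNonneg M) (k : ℕ) :
    MNonneg (M ^ k) := by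
  induction k with
  | zero => intro i j; rw [pow_zero]; by_cases h : i = j <;>
      simp [Matrix.one_apply, h]
  | succ k ih =>
      rw [pow_succ]
      exact ih.mul hM

lemma SLow.pow_bound {M : Matrix (Fin n) (Fin n) ℝ} (hM : SLow M) :
    ∀ (k : ℕ) (i j : Fin n), (M ^ k) i j ≠ 0 → (j:ℕ) + k ≤ (i:ℕ) := by
  intro k
  induction k with
  | zero =>
      intro i j h
      rw [pow_zero] at h
      by_cases hij : i = j
      · subst hij; omega
      · exact absurd (Matrix.one_apply_ne hij) h
  | succ k ih =>
      intro i j h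
      rw [pow_succ, Matrix.mul_apply] at h
      obtain ⟨l, -, hl⟩ := Finset.exists_ne_zero_of_sum_ne_zero h
      have h1 : (M ^ k) i l ≠ 0 := fun hz => hl (by rw [hz, zero_mul])
      have h2 : M l j ≠ 0 := fun hz => hl (by rw [hz, mul_zero])
      have h3 := ih i l h1
      have h4 : (j:ℕ) < (l:ℕ) := by
        by_contra hc
        exact h2 (hM l j hc)
      omega

lemma SLow.pow_eq_zero {M : Matrix (Fin n) (Fin n) ℝ} (hM : SLow M) : M ^ n = 0 := by
  funext i j
  by_contra h
  have := hM.pow_bound n i j h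
  omega

lemma SLow.pow_diag {M : Matrix (Fin n) (Fin n) ℝ} (hM : SLow M) {k : ℕ} (hk : k ≠ 0)
    (i : Fin n) : (M ^ k) i i = 0 := by
  by_contra h
  have := hM.pow_bound k i i h
  omega

lemma neumann (hn : 1 ≤ n) (d : Fin n → ℝ) (hd : ∀ i, 0 < d i)
    (L : Matrix (Fin n) (Fin n) ℝ) (hL : SLow L) (hLnn : MNonneg L)
    (ω : ℝ) (hω : 0 < ω) :
    ∃ W : Matrix (Fin n) (Fin n) ℝ, MNonneg W ∧
      (Matrix.diagonal d - ω • L) * W = 1 ∧ W * (Matrix.diagonal d - ω • L) = 1 ∧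
      (∀ i, W i i = (d i)⁻¹) := by
  set Dinv : Matrix (Fin n) (Fin n) ℝ := Matrix.diagonal (fun i => (d i)⁻¹) with hDinv
  set C : Matrix (Fin n) (Fin n) ℝ := ω • (Dinv * L) with hCdef
  have hCent : ∀ i j, C i j = ω * ((d i)⁻¹ * L i j) := by
    intro i j
    simp [hCdef, hDinv, Matrix.diagonal_mul]
  have hCsl : SLow C := by
    intro i j hij
    rw [hCent, hL i j hij, mul_zero, mul_zero]
  have hCnn : MNonneg C := by
    intro i j
    rw [hCent]
    have := hd i
    have := hLnn i j
    positivity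
  set G : Matrix (Fin n) (Fin n) ℝ := ∑ j ∈ Finset.range n, C ^ j with hG
  set W : Matrix (Fin n) (Fin n) ℝ := G * Dinv with hW
  have hDinv_nn : MNonneg Dinv := by
    intro i j
    simp only [hDinv, Matrix.diagonal_apply]
    split
    · exact le_of_lt (inv_pos.mpr (hd i))
    · exact le_refl 0
  have hGnn : MNonneg G := by
    intro i j
    rw [hG, Matrix.sum_apply]
    exact Finset.sum_nonneg fun k _ => (hCnn.pow k) i j
  have hWnn : MNonneg W := hGnn.mul hDinv_nn
  have hCn : C ^ n = 0 := hCsl.pow_eq_zero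
  have hgeom1 : G * (1 - C) = 1 := by
    have h1 := geom_sum_mul C n
    rw [hCn] at h1
    rw [mul_sub, mul_one]
    rw [mul_sub, mul_one] at h1
    have h2 : G - G * C = -(G * C - G) := (neg_sub _ _).symm
    rw [h2, ← hG] at *
    rw [show G * C - G = (0:Matrix (Fin n) (Fin n) ℝ) - 1 from h1, zero_sub, neg_neg]
  have hgeom2 : (1 - C) * G = 1 := by
    have h1 := mul_geom_sum C n
    rw [hCn] at h1
    rw [sub_mul, one_mul]
    rw [sub_mul, one_mul] at h1
    have h2 : G - C * G = -(C * G - G) := (neg_sub _ _).symm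
    rw [h2]
    rw [show C * G - G = (0:Matrix (Fin n) (Fin n) ℝ) - 1 from h1, zero_sub, neg_neg]
  have hDD : Matrix.diagonal d * Dinv = 1 := by
    rw [hDinv, Matrix.diagonal_mul_diagonal]
    convert Matrix.diagonal_one
    exact mul_inv_cancel₀ (hd _).ne'
  have hDD' : Dinv * Matrix.diagonal d = 1 := by
    rw [hDinv, Matrix.diagonal_mul_diagonal]
    convert Matrix.diagonal_one
    exact inv_mul_cancel₀ (hd _).ne'
  have hM : Matrix.diagonal d - ω • L = Matrix.diagonal d * (1 - C) := by
    rw [mul_sub, mul_one, hCdef, Matrix.mul_smul, ← Matrix.mul_assoc, hDD, Matrix.one_mul]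
  refine ⟨W, hWnn, ?_, ?_, ?_⟩
  · rw [hM, hW, Matrix.mul_assoc, ← Matrix.mul_assoc (1 - C) G Dinv, hgeom2,
      Matrix.one_mul, hDD]
  · rw [hM, hW, Matrix.mul_assoc, ← Matrix.mul_assoc Dinv _ _, hDD', Matrix.one_mul, hgeom1]
  · intro i
    rw [hW, Matrix.mul_diagonal, hG, Matrix.sum_apply]
    have hsum : ∑ j ∈ Finset.range n, (C ^ j) i i = 1 := by
      rw [Finset.sum_eq_single 0]
      · rw [pow_zero, Matrix.one_apply_eq]
      · intro b _ hb
        exact hCsl.pow_diag hb i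
      · intro h
        exact absurd (Finset.mem_range.mpr hn) h
    rw [hsum, one_mul]

lemma mulVec_nonneg {W : Matrix (Fin n) (Fin n) ℝ} (hW : MNonneg W) {v : Fin n → ℝ}
    (hv : ∀ i, 0 ≤ v i) (i : Fin n) : 0 ≤ W.mulVec v i := by
  rw [Matrix.mulVec, dotProduct]
  exact Finset.sum_nonneg fun l _ => mul_nonneg (hW i l) (hv l)

lemma mulVec_mono {W : Matrix (Fin n) (Fin n) ℝ} (hW : MNonneg W) {u v : Fin n → ℝ}
    (huv : ∀ i, u i ≤ v i) (i : Fin n) : W.mulVec u i ≤ W.mulVec v i := by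
  simp only [Matrix.mulVec, dotProduct]
  exact Finset.sum_le_sum fun l _ => mul_le_mul_of_nonneg_left (huv l) (hW i l)

lemma mulVec_diag_le {W : Matrix (Fin n) (Fin n) ℝ} (hW : MNonneg W) {v : Fin n → ℝ}
    (hv : ∀ i, 0 ≤ v i) (i : Fin n) : W i i * v i ≤ W.mulVec v i := by
  simp only [Matrix.mulVec, dotProduct]
  exact Finset.single_le_sum (f := fun l => W i l * v l)
    (fun l _ => mul_nonneg (hW i l) (hv l)) (Finset.mem_univ i)

end MatrixAux

section AppStruct

variable {m n : ℕ}

lemma haoff {A : Tensor m n} (hA : StrongM A) :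
    ∀ i f, (¬ ∀ t : Fin (m-1), f t = i) → A i f ≤ 0 := by
  obtain ⟨η, B, hB, -, hAeq⟩ := hA
  intro i f hf
  rw [hAeq]
  simp only [Pi.sub_apply, Pi.smul_apply, smul_eq_mul, idT]
  rw [if_neg hf]
  have := hB i f
  linarith

lemma maj_offdiag_le (hm : 2 ≤ m) {A : Tensor m n} (hA : StrongM A) (i j : Fin n)
    (hji : j ≠ i) : maj A i j ≤ 0 := by
  apply haoff hA
  intro hall
  exact hji (hall ⟨0, by omega⟩)

lemma mmul_idT_const (hm : 2 ≤ m) (P : Matrix (Fin n) (Fin n) ℝ) (i c : Fin n) :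
    mmul P (idT m n) i (fun _ => c) = P i c := by
  simp only [mmul, idT]
  rw [Finset.sum_eq_single c]
  · rw [if_pos (fun _ => rfl), mul_one]
  · intro j _ hj
    rw [if_neg, mul_zero]
    intro hall
    exact hj ((hall ⟨0, by omega⟩).symm)
  · intro h
    exact absurd (Finset.mem_univ c) h

lemma mmul_idT_nonconst (P : Matrix (Fin n) (Fin n) ℝ) (i : Fin n)
    {f : Fin (m-1) → Fin n} (hf : ∀ c, f ≠ fun _ => c) :
    mmul P (idT m n) i f = 0 := by
  simp only [mmul, idT]
  apply Finset.sum_eq_zero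
  intro j _
  rw [if_neg, mul_zero]
  intro hall
  exact hf j (funext hall)

lemma Ftens_const (hm : 2 ≤ m) {A : Tensor m n} (hdiag : UnitDiag A) (i c : Fin n) :
    Ftens A i (fun _ => c) = if (i:ℕ) < (c:ℕ) then -(maj A i c) else 0 := by
  simp only [Ftens, Pi.sub_apply]
  rw [show Ltens A i (fun _ => c) = Lmat A i c from mmul_idT_const hm _ i c]
  simp only [idT, Lmat]
  by_cases hic : c = i
  · subst hic
    rw [if_pos (fun _ => rfl), if_neg (show ¬(c:ℕ) < (c:ℕ) by omega)]
    have h1 : A c (fun _ => c) = 1 := hdiag c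
    rw [h1]
    ring
  · have hvne : (c:ℕ) ≠ (i:ℕ) := fun h => hic (Fin.ext h)
    rw [if_neg (fun hall : ∀ _t : Fin (m-1), c = i => hic (hall ⟨0, by omega⟩))]
    by_cases h2 : (c:ℕ) < (i:ℕ)
    · rw [if_pos h2, if_neg (by omega)]
      show 0 - -maj A i c - A i (fun _ => c) = 0
      show 0 - -maj A i c - maj A i c = 0
      ring
    · rw [if_neg h2, if_pos (by omega)]
      show 0 - 0 - A i (fun _ => c) = -(maj A i c)
      show 0 - 0 - maj A i c = -(maj A i c)
      ring

lemma Ftens_nonconst {A : Tensor m n} (i : Fin n) {f : Fin (m-1) → Fin n}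
    (hf : ∀ c, f ≠ fun _ => c) : Ftens A i f = -(A i f) := by
  simp only [Ftens, Pi.sub_apply, idT, Ltens]
  rw [if_neg (fun hall => hf i (funext hall)), mmul_idT_nonconst _ _ hf]
  ring

lemma Ftens_nonneg (hm : 2 ≤ m) {A : Tensor m n} (hdiag : UnitDiag A) (hA : StrongM A) :
    TNonneg (Ftens A) := by
  intro i f
  by_cases hc : ∃ c, f = fun _ => c
  · obtain ⟨c, rfl⟩ := hc
    rw [Ftens_const hm hdiag]
    split
    · rename_i h
      rw [neg_nonneg]
      exact maj_offdiag_le hm hA i c (fun he => by rw [he] at h; omega)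
    · exact le_refl 0
  · push_neg at hc
    rw [Ftens_nonconst i hc, neg_nonneg]
    exact haoff hA i f (fun hall => hc i (funext hall))

lemma maj_nonneg_of {T : Tensor m n} (hT : TNonneg T) : MNonneg (maj T) :=
  fun i j => hT i _

lemma mmul_nonneg {P : Matrix (Fin n) (Fin n) ℝ} (hP : MNonneg P) {T : Tensor m n}
    (hT : TNonneg T) : TNonneg (mmul P T) := by
  intro i f
  exact Finset.sum_nonneg fun j _ => mul_nonneg (hP i j) (hT j f)

lemma Ltens_nonneg (hm : 2 ≤ m) {A : Tensor m n} (hA : StrongM A) :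
    TNonneg (Ltens A) := by
  apply mmul_nonneg _ idT_nonneg
  intro i j
  simp only [Lmat]
  split
  · rename_i h
    rw [neg_nonneg]
    exact maj_offdiag_le hm hA i j (fun he => by rw [he] at h; omega)
  · exact le_refl 0

lemma Lmat_nonneg (hm : 2 ≤ m) {A : Tensor m n} (hA : StrongM A) : MNonneg (Lmat A) := by
  intro i j
  simp only [Lmat]
  split
  · rename_i h
    rw [neg_nonneg]
    exact maj_offdiag_le hm hA i j (fun he => by rw [he] at h; omega)
  · exact le_refl 0

lemma Smat_nonneg (hm : 2 ≤ m) {A : Tensor m n} (hA : StrongM A)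
    {α : Fin n → ℝ} {s : ℕ} (hs1 : 1 ≤ s)
    (hα : ∀ i : Fin n, (i : ℕ) + s < n → α i ∈ Set.Icc (0 : ℝ) 1) :
    MNonneg (Smat A α s) := by
  intro i j
  simp only [Smat]
  split
  · rename_i h
    have hji : j ≠ i := fun he => by rw [he] at h; omega
    have hmaj := maj_offdiag_le hm hA i j hji
    have hrange : (i:ℕ) + s < n := by rw [← h]; exact j.isLt
    have hα1 := (hα i hrange).1
    nlinarith
  · exact le_refl 0

lemma Kmat_nonneg (hm : 2 ≤ m) {A : Tensor m n} (hA : StrongM A)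
    {β : Fin n → ℝ} {k : ℕ} (hk1 : 1 ≤ k)
    (hβ : ∀ i : Fin n, k ≤ (i : ℕ) → β i ∈ Set.Icc (0 : ℝ) 1) :
    MNonneg (Kmat A β k) := by
  intro i j
  simp only [Kmat]
  split
  · rename_i h
    have hji : j ≠ i := fun he => by rw [he] at h; omega
    have hmaj := maj_offdiag_le hm hA i j hji
    have hβ1 := (hβ i (by omega)).1
    nlinarith
  · exact le_refl 0

lemma LK_nonneg (hm : 2 ≤ m) {A : Tensor m n} (hA : StrongM A)
    {β : Fin n → ℝ} {k : ℕ} (hk1 : 1 ≤ k)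
    (hβ : ∀ i : Fin n, k ≤ (i : ℕ) → β i ∈ Set.Icc (0 : ℝ) 1) :
    MNonneg (Lmat A - Kmat A β k) := by
  intro i j
  simp only [Matrix.sub_apply, Lmat, Kmat]
  by_cases h : (i:ℕ) = (j:ℕ) + k
  · rw [if_pos h, if_pos (by omega)]
    have hji : j ≠ i := fun he => by rw [he] at h; omega
    have hmaj := maj_offdiag_le hm hA i j hji
    have hβ1 := (hβ i (by omega)).1
    have hβ2 := (hβ i (by omega)).2
    nlinarith
  · rw [if_neg h, sub_zero]
    split
    · rename_i h2
      rw [neg_nonneg]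
      exact maj_offdiag_le hm hA i j (fun he => by rw [he] at h2; omega)
    · exact le_refl 0

lemma SLow_Lmat {A : Tensor m n} : SLow (Lmat A) := by
  intro i j h
  simp only [Lmat]
  rw [if_neg h]

lemma SLow_Kmat {A : Tensor m n} {β : Fin n → ℝ} {k : ℕ} (hk1 : 1 ≤ k) :
    SLow (Kmat A β k) := by
  intro i j h
  simp only [Kmat]
  rw [if_neg (fun he => h (by omega))]

lemma SLow_LmatOf {T : Tensor m n} : SLow (LmatOf T) := by
  intro i j h
  simp only [LmatOf]
  rw [if_neg h]

lemma SLow.mul_slow {M N : Matrix (Fin n) (Fin n) ℝ} (hM : SLow M) (hN : SLow N) :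
    SLow (M * N) := by
  intro i j h
  rw [Matrix.mul_apply]
  apply Finset.sum_eq_zero
  intro l _
  by_cases hl : (l:ℕ) < (i:ℕ)
  · rw [hN l j (by omega), mul_zero]
  · rw [hM i l hl, zero_mul]

lemma SLow.add {M N : Matrix (Fin n) (Fin n) ℝ} (hM : SLow M) (hN : SLow N) :
    SLow (M + N) := by
  intro i j h
  simp only [Matrix.add_apply, hM i j h, hN i j h, add_zero]

lemma SLow.sub {M N : Matrix (Fin n) (Fin n) ℝ} (hM : SLow M) (hN : SLow N) :
    SLow (M - N) := by
  intro i j h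
  simp only [Matrix.sub_apply, hM i j h, hN i j h, sub_zero]

lemma LmatOf_nonneg {T : Tensor m n} (hT : TNonneg T) : MNonneg (LmatOf T) := by
  intro i j
  simp only [LmatOf]
  split
  · exact hT i _
  · exact le_refl 0

lemma upper_part_nonneg (hm : 2 ≤ m) (T : Tensor m n) (hT : TNonneg T) :
    TNonneg (T - mmul (DmatOf T) (idT m n) - mmul (LmatOf T) (idT m n)) := by
  intro i f
  simp only [Pi.sub_apply]
  by_cases hc : ∃ c, f = fun _ => c
  · obtain ⟨c, rfl⟩ := hc
    rw [mmul_idT_const hm, mmul_idT_const hm]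
    simp only [DmatOf, LmatOf]
    by_cases h1 : i = c
    · subst h1
      rw [if_pos rfl, if_neg (by omega)]
      show T i (fun _ => i) - maj T i i - 0 ≥ 0
      show T i (fun _ => i) - T i (fun _ => i) - 0 ≥ 0
      ring_nf
      exact le_refl 0
    · rw [if_neg h1]
      by_cases h2 : (c:ℕ) < (i:ℕ)
      · rw [if_pos h2]
        show T i (fun _ => c) - 0 - maj T i c ≥ 0
        show T i (fun _ => c) - 0 - T i (fun _ => c) ≥ 0
        ring_nf
        exact le_refl 0
      · rw [if_neg h2]
        have := hT i (fun _ => c)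
        linarith
  · push_neg at hc
    rw [mmul_idT_nonconst _ _ hc, mmul_idT_nonconst _ _ hc]
    have := hT i f
    linarith

lemma Falpha_nonneg (hm : 2 ≤ m) {A : Tensor m n} (hA : StrongM A)
    {α : Fin n → ℝ} {s : ℕ} (hs1 : 1 ≤ s)
    (hα : ∀ i : Fin n, (i : ℕ) + s < n → α i ∈ Set.Icc (0 : ℝ) 1) :
    TNonneg (Falpha A α s) := by
  have hT : TNonneg (mmul (Smat A α s) (Ltens A)) :=
    mmul_nonneg (Smat_nonneg hm hA hs1 hα) (Ltens_nonneg hm hA)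
  intro i f
  have := upper_part_nonneg hm _ hT i f
  simpa only [Falpha, Dalpha, Lalpha] using this

lemma Fbeta_nonneg (hm : 2 ≤ m) {A : Tensor m n} (hdiag : UnitDiag A) (hA : StrongM A)
    {β : Fin n → ℝ} {k : ℕ} (hk1 : 1 ≤ k)
    (hβ : ∀ i : Fin n, k ≤ (i : ℕ) → β i ∈ Set.Icc (0 : ℝ) 1) :
    TNonneg (Fbeta A β k) := by
  have hT : TNonneg (mmul (Kmat A β k) (Ftens A)) :=
    mmul_nonneg (Kmat_nonneg hm hA hk1 hβ) (Ftens_nonneg hm hdiag hA)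
  intro i f
  have := upper_part_nonneg hm _ hT i f
  simpa only [Fbeta, Dbeta, Lbeta] using this

lemma FminusS_nonneg (hm : 2 ≤ m) {A : Tensor m n} (hdiag : UnitDiag A) (hA : StrongM A)
    {α : Fin n → ℝ} {s : ℕ} (hs1 : 1 ≤ s)
    (hα : ∀ i : Fin n, (i : ℕ) + s < n → α i ∈ Set.Icc (0 : ℝ) 1) :
    ∀ i f, mmul (Smat A α s) (idT m n) i f ≤ Ftens A i f := by
  intro i f
  by_cases hc : ∃ c, f = fun _ => c
  · obtain ⟨c, rfl⟩ := hc
    rw [mmul_idT_const hm, Ftens_const hm hdiag]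
    simp only [Smat]
    by_cases h : (c:ℕ) = (i:ℕ) + s
    · rw [if_pos h, if_pos (by omega)]
      have hji : c ≠ i := fun he => by rw [he] at h; omega
      have hmaj := maj_offdiag_le hm hA i c hji
      have hrange : (i:ℕ) + s < n := by rw [← h]; exact c.isLt
      have hα1 := (hα i hrange).1
      have hα2 := (hα i hrange).2
      nlinarith
    · rw [if_neg h]
      split
      · rename_i h2
        rw [neg_nonneg]
        exact maj_offdiag_le hm hA i c (fun he => by rw [he] at h2; omega)
      · exact le_refl 0
  · push_neg at hc
    rw [mmul_idT_nonconst _ _ hc, Ftens_nonconst i hc, neg_nonneg]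
    exact haoff hA i f (fun hall => hc i (funext hall))

lemma Fab_nonneg (hm : 2 ≤ m) {A : Tensor m n} (hdiag : UnitDiag A) (hA : StrongM A)
    {α β : Fin n → ℝ} {s k : ℕ} (hs1 : 1 ≤ s) (hk1 : 1 ≤ k)
    (hα : ∀ i : Fin n, (i : ℕ) + s < n → α i ∈ Set.Icc (0 : ℝ) 1)
    (hβ : ∀ i : Fin n, k ≤ (i : ℕ) → β i ∈ Set.Icc (0 : ℝ) 1) :
    TNonneg (Fab A α β s k) := by
  intro i f
  simp only [Fab, Pi.add_apply, Pi.sub_apply]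
  have h1 := FminusS_nonneg hm hdiag hA hs1 hα i f
  have h2 := mmul_nonneg (Smat_nonneg hm hA hs1 hα) (Ftens_nonneg hm hdiag hA) i f
  have h3 := Falpha_nonneg hm hA hs1 hα i f
  have h4 := Fbeta_nonneg hm hdiag hA hk1 hβ i f
  linarith

/-- The lower-triangular matrix of `Lab`. -/
def LtMat (A : Tensor m n) (α β : Fin n → ℝ) (s k : ℕ) : Matrix (Fin n) (Fin n) ℝ :=
  Lmat A - Kmat A β k + Kmat A β k * Lmat A
    + LmatOf (mmul (Smat A α s) (Ltens A)) + LmatOf (mmul (Kmat A β k) (Ftens A))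

/-- The diagonal matrix of `Dab`. -/
def DmMat (A : Tensor m n) (α β : Fin n → ℝ) (s k : ℕ) : Matrix (Fin n) (Fin n) ℝ :=
  1 - DmatOf (mmul (Smat A α s) (Ltens A)) - DmatOf (mmul (Kmat A β k) (Ftens A))

lemma Lab_eq (A : Tensor m n) (α β : Fin n → ℝ) (s k : ℕ) :
    Lab A α β s k = mmul (LtMat A α β s k) (idT m n) := by
  simp only [Lab, Ltens, Lalpha, Lbeta, LtMat, mmul_addl, mmul_subl, mmul_mmul]

lemma Dab_eq (A : Tensor m n) (α β : Fin n → ℝ) (s k : ℕ) :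
    Dab A α β s k = mmul (DmMat A α β s k) (idT m n) := by
  simp only [Dab, Dalpha, Dbeta, DmMat, mmul_subl, mmul_one]

lemma LtMat_nonneg (hm : 2 ≤ m) {A : Tensor m n} (hdiag : UnitDiag A) (hA : StrongM A)
    {α β : Fin n → ℝ} {s k : ℕ} (hs1 : 1 ≤ s) (hk1 : 1 ≤ k)
    (hα : ∀ i : Fin n, (i : ℕ) + s < n → α i ∈ Set.Icc (0 : ℝ) 1)
    (hβ : ∀ i : Fin n, k ≤ (i : ℕ) → β i ∈ Set.Icc (0 : ℝ) 1) :
    MNonneg (LtMat A α β s k) := by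
  have h1 := LK_nonneg hm hA hk1 hβ
  have h2 := (Kmat_nonneg hm hA hk1 hβ).mul (Lmat_nonneg hm hA)
  have h3 := LmatOf_nonneg (mmul_nonneg (Smat_nonneg hm hA hs1 hα) (Ltens_nonneg hm hA))
  have h4 := LmatOf_nonneg (mmul_nonneg (Kmat_nonneg hm hA hk1 hβ) (Ftens_nonneg hm hdiag hA))
  exact ((h1.add h2).add h3).add h4

lemma LtMat_slow {A : Tensor m n} {α β : Fin n → ℝ} {s k : ℕ} (hk1 : 1 ≤ k) :
    SLow (LtMat A α β s k) := by
  have h1 := (SLow_Lmat (A := A)).sub (SLow_Kmat (A := A) (β := β) hk1)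
  have h2 := (SLow_Kmat (A := A) (β := β) hk1).mul_slow (SLow_Lmat (A := A))
  exact ((h1.add h2).add SLow_LmatOf).add SLow_LmatOf

lemma DmMat_offdiag {A : Tensor m n} {α β : Fin n → ℝ} {s k : ℕ} {i j : Fin n}
    (h : i ≠ j) : DmMat A α β s k i j = 0 := by
  simp only [DmMat, Matrix.sub_apply, Matrix.one_apply_ne h, DmatOf]
  rw [if_neg h, if_neg h]
  ring

lemma DmMat_diagonal (A : Tensor m n) (α β : Fin n → ℝ) (s k : ℕ) :
    DmMat A α β s k = Matrix.diagonal (fun i => DmMat A α β s k i i) := by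
  funext i j
  by_cases h : i = j
  · subst h
    rw [Matrix.diagonal_apply_eq]
  · rw [Matrix.diagonal_apply_ne _ h, DmMat_offdiag h]

lemma DmMat_diag_eq (A : Tensor m n) (α β : Fin n → ℝ) (s k : ℕ) (i : Fin n) :
    DmMat A α β s k i i = 1 - maj (mmul (Smat A α s) (Ltens A)) i i
      - maj (mmul (Kmat A β k) (Ftens A)) i i := by
  simp only [DmMat, Matrix.sub_apply, Matrix.one_apply_eq, DmatOf]
  simp

lemma split_eq (A : Tensor m n) (α β : Fin n → ℝ) (s k : ℕ) :
    Dab A α β s k - Lab A α β s k - Fab A α β s k = precond A α β s k := by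
  simp only [Dab, Lab, Fab, Falpha, Fbeta, precond, Pmat, Ftens, mmul_addl, mmul_subl,
    mmul_sub, mmul_add, mmul_one]
  abel

end AppStruct


theorem stmt14 {m n : ℕ} (hm : 2 ≤ m) (hn : 1 ≤ n)
    (A : Tensor m n) (hA : StrongM A) (hdiag : UnitDiag A)
    (s k : ℕ) (hs1 : 1 ≤ s) (hs2 : s ≤ n - 1) (hk1 : 1 ≤ k) (hk2 : k ≤ n - 1)
    (α β : Fin n → ℝ)
    (hα : ∀ i : Fin n, (i : ℕ) + s < n → α i ∈ Set.Icc (0 : ℝ) 1)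
    (hβ : ∀ i : Fin n, k ≤ (i : ℕ) → β i ∈ Set.Icc (0 : ℝ) 1)
    (hD : ∀ i : Fin n,
      0 < 1 - maj (mmul (Smat A α s) (Ltens A)) i i
            - maj (mmul (Kmat A β k) (Ftens A)) i i)
    (ω₁ ω₂ : ℝ) (hω1 : 0 < ω₁) (hω12 : ω₁ < ω₂) (hω2 : ω₂ ≤ 1) :
    rho (Hsor A α β s k ω₂) ≤ rho (Hsor A α β s k ω₁) ∧
    rho (Hsor A α β s k ω₁) < 1 := by
  have hp : m - 1 ≠ 0 := by omega
  obtain ⟨y, hy, hAy⟩ := semipos hm hn hA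
  have hdpos : ∀ i, 0 < DmMat A α β s k i i := by
    intro i
    rw [DmMat_diag_eq]
    exact hD i
  have hLt_nn : MNonneg (LtMat A α β s k) := LtMat_nonneg hm hdiag hA hs1 hk1 hα hβ
  have hLt_sl : SLow (LtMat A α β s k) := LtMat_slow hk1
  have hFab_nn : TNonneg (Fab A α β s k) := Fab_nonneg hm hdiag hA hs1 hk1 hα hβ
  have hDm_nn : MNonneg (DmMat A α β s k) := by
    intro i j
    by_cases h : i = j
    · subst h; exact (hdpos i).le
    · rw [DmMat_offdiag h]
  -- the positive vector z' = P_{αβ} A y^{m-1}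
  have hz' : ∀ i, 0 < tmul (precond A α β s k) y i := by
    intro i
    rw [precond, tmul_mmul]
    rw [Pmat, Matrix.add_mulVec, Matrix.add_mulVec, Matrix.one_mulVec]
    have h1 : 0 ≤ (Smat A α s).mulVec (tmul A y) i :=
      mulVec_nonneg (Smat_nonneg hm hA hs1 hα) (fun j => (hAy j).le) i
    have h2 : 0 ≤ (Kmat A β k).mulVec (tmul A y) i :=
      mulVec_nonneg (Kmat_nonneg hm hA hk1 hβ) (fun j => (hAy j).le) i
    have h3 := hAy i
    simp only [Pi.add_apply]
    linarith
  have hvpos : ∀ i, 0 < y i ^ (m-1) := fun i => pow_pos (hy i) _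
  -- identity : tmul Fab y = Dm *ᵥ v - Lt *ᵥ v - z'
  have hFab_y : ∀ i, tmul (Fab A α β s k) y i
      = (DmMat A α β s k).mulVec (fun j => y j ^ (m-1)) i
        - (LtMat A α β s k).mulVec (fun j => y j ^ (m-1)) i
        - tmul (precond A α β s k) y i := by
    intro i
    have h1 : tmul (precond A α β s k) y i
        = tmul (Dab A α β s k) y i - tmul (Lab A α β s k) y i
          - tmul (Fab A α β s k) y i := by
      rw [← split_eq A α β s k, tmul_sub, tmul_sub]
      simp only [Pi.sub_apply]
    have h2 : tmul (Dab A α β s k) y i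
        = (DmMat A α β s k).mulVec (fun j => y j ^ (m-1)) i := by
      rw [Dab_eq, tmul_mmul_idT]
    have h3 : tmul (Lab A α β s k) y i
        = (LtMat A α β s k).mulVec (fun j => y j ^ (m-1)) i := by
      rw [Lab_eq, tmul_mmul_idT]
    linarith
  -- per-ω package
  have pack : ∀ ω : ℝ, 0 < ω → ω ≤ 1 → ∃ W : Matrix (Fin n) (Fin n) ℝ,
      MNonneg W ∧ (∀ i, W i i = (DmMat A α β s k i i)⁻¹) ∧
      (∀ x : Fin n → ℝ, tmul (Hsor A α β s k ω) x
        = W.mulVec ((1 - ω) • (DmMat A α β s k).mulVec (fun i => x i ^ (m-1))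
            + ω • tmul (Fab A α β s k) x)) ∧
      TNonneg (Hsor A α β s k ω) ∧
      (∀ u : Fin n → ℝ,
        W.mulVec ((DmMat A α β s k - ω • LtMat A α β s k).mulVec u) = u) ∧
      (∀ u : Fin n → ℝ,
        (DmMat A α β s k - ω • LtMat A α β s k).mulVec (W.mulVec u) = u) := by
    intro ω hω0 hω1'
    obtain ⟨W, hWnn, hMW, hWM, hWdiag⟩ :=
      neumann hn (fun i => DmMat A α β s k i i) hdpos (LtMat A α β s k) hLt_sl hLt_nn ω hω0
    rw [← DmMat_diagonal A α β s k] at hMW hWM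
    have hmajE : maj (Eomega A α β s k ω)
        = (1/ω) • (DmMat A α β s k - ω • LtMat A α β s k) := by
      rw [show Eomega A α β s k ω = (1/ω) • (Dab A α β s k - ω • Lab A α β s k) from rfl,
        Dab_eq, Lab_eq, maj_smul, maj_sub, maj_smul, maj_mmul, maj_mmul, maj_idT hm,
        Matrix.mul_one, Matrix.mul_one]
    have hinv : (maj (Eomega A α β s k ω))⁻¹ = ω • W := by
      apply Matrix.inv_eq_right_inv
      rw [hmajE, Matrix.smul_mul, Matrix.mul_smul, hMW, smul_smul, one_div,
        inv_mul_cancel₀ hω0.ne', one_smul]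
    have hform : ∀ x : Fin n → ℝ, tmul (Hsor A α β s k ω) x
        = W.mulVec ((1 - ω) • (DmMat A α β s k).mulVec (fun i => x i ^ (m-1))
            + ω • tmul (Fab A α β s k) x) := by
      intro x
      rw [show Hsor A α β s k ω
        = mmul (maj (Eomega A α β s k ω))⁻¹ (Fomega A α β s k ω) from rfl]
      rw [tmul_mmul, hinv]
      rw [show Fomega A α β s k ω
        = (1/ω) • ((1 - ω) • Dab A α β s k + ω • Fab A α β s k) from rfl]
      rw [tmul_smul, tmul_add, tmul_smul, tmul_smul, Dab_eq, tmul_mmul_idT]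
      rw [Matrix.smul_mulVec, Matrix.mulVec_smul, smul_smul, mul_one_div,
        div_self hω0.ne', one_smul]
    have hFo_nn : TNonneg (Fomega A α β s k ω) := by
      intro i f
      rw [show Fomega A α β s k ω
        = (1/ω) • ((1 - ω) • Dab A α β s k + ω • Fab A α β s k) from rfl]
      simp only [Pi.smul_apply, Pi.add_apply, smul_eq_mul]
      have hd1 : 0 ≤ Dab A α β s k i f := by
        rw [Dab_eq]
        exact mmul_nonneg hDm_nn idT_nonneg i f
      have hf1 := hFab_nn i f
      have h1ω : 0 ≤ 1 - ω := by linarith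
      have h2 : 0 ≤ 1/ω := by positivity
      exact mul_nonneg h2 (add_nonneg (mul_nonneg h1ω hd1) (mul_nonneg hω0.le hf1))
    have hHnn : TNonneg (Hsor A α β s k ω) := by
      intro i f
      rw [show Hsor A α β s k ω
        = mmul (maj (Eomega A α β s k ω))⁻¹ (Fomega A α β s k ω) from rfl, hinv]
      apply mmul_nonneg _ hFo_nn
      intro a b
      simp only [Matrix.smul_apply, smul_eq_mul]
      exact mul_nonneg hω0.le (hWnn a b)
    refine ⟨W, hWnn, hWdiag, hform, hHnn, ?_, ?_⟩
    · intro u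
      rw [Matrix.mulVec_mulVec, hWM, Matrix.one_mulVec]
    · intro u
      rw [Matrix.mulVec_mulVec, hMW, Matrix.one_mulVec]
  -- upper bound on the spectrum for each ω
  have bound : ∀ ω : ℝ, 0 < ω → ω ≤ 1 → ∃ θ : ℝ, 0 ≤ θ ∧ θ < 1 ∧
      (∀ lam : ℂ, IsEigenvalue (Hsor A α β s k ω) lam → ‖lam‖ ≤ θ) := by
    intro ω hω0 hω1'
    obtain ⟨W, hWnn, hWdiag, hform, hHnn, hWinv1, hWinv2⟩ := pack ω hω0 hω1'
    have hHy : ∀ i, tmul (Hsor A α β s k ω) y i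
        = y i ^ (m-1) - ω * W.mulVec (tmul (precond A α β s k) y) i := by
      intro i
      rw [hform y]
      have harg : (1 - ω) • (DmMat A α β s k).mulVec (fun j => y j ^ (m-1))
          + ω • tmul (Fab A α β s k) y
          = (DmMat A α β s k - ω • LtMat A α β s k).mulVec (fun j => y j ^ (m-1))
            - ω • tmul (precond A α β s k) y := by
        funext j
        simp only [Pi.add_apply, Pi.smul_apply, Pi.sub_apply, smul_eq_mul,
          Matrix.sub_mulVec, Matrix.smul_mulVec]
        rw [hFab_y j]
        ring
      rw [harg, Matrix.mulVec_sub, hWinv1, Matrix.mulVec_smul]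
      simp only [Pi.sub_apply, Pi.smul_apply, smul_eq_mul]
    have hWz : ∀ i, 0 < W.mulVec (tmul (precond A α β s k) y) i := by
      intro i
      have h1 := mulVec_diag_le hWnn (fun j => (hz' j).le) i
      rw [hWdiag] at h1
      have h2 : 0 < (DmMat A α β s k i i)⁻¹ * tmul (precond A α β s k) y i :=
        mul_pos (inv_pos.mpr (hdpos i)) (hz' i)
      linarith
    have hHylt : ∀ i, tmul (Hsor A α β s k ω) y i < y i ^ (m-1) := by
      intro i
      rw [hHy i]
      nlinarith [hWz i]
    have hHy0 : ∀ i, 0 ≤ tmul (Hsor A α β s k ω) y i :=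
      fun i => tmul_nonneg _ hHnn y (fun j => (hy j).le) i
    obtain ⟨i₀, -, hmax⟩ := Finset.exists_max_image Finset.univ
      (fun i => tmul (Hsor A α β s k ω) y i / y i ^ (m-1)) ⟨⟨0, hn⟩, Finset.mem_univ _⟩
    refine ⟨tmul (Hsor A α β s k ω) y i₀ / y i₀ ^ (m-1),
      div_nonneg (hHy0 i₀) (hvpos i₀).le,
      (div_lt_one (hvpos i₀)).mpr (hHylt i₀), ?_⟩
    intro lam hlam
    apply cw_upper _ hHnn hy _ hlam
    intro i
    have h1 := hmax i (Finset.mem_univ i)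
    exact (div_le_iff₀ (hvpos i)).mp h1
  obtain ⟨θ₁, hθ₁0, hθ₁1, hbound₁⟩ := bound ω₁ hω1 (le_trans hω12.le hω2)
  obtain ⟨θ₂, hθ₂0, hθ₂1, hbound₂⟩ := bound ω₂ (lt_trans hω1 hω12) hω2
  have hrho1lt : rho (Hsor A α β s k ω₁) < 1 :=
    lt_of_le_of_lt (rho_le_of_bound _ hθ₁0 hbound₁) hθ₁1
  refine ⟨?_, hrho1lt⟩
  -- monotonicity
  obtain ⟨W₁, hW₁nn, hW₁diag, hform₁, hH₁nn, hW₁inv1, hW₁inv2⟩ :=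
    pack ω₁ hω1 (le_trans hω12.le hω2)
  obtain ⟨W₂, hW₂nn, hW₂diag, hform₂, hH₂nn, hW₂inv1, hW₂inv2⟩ :=
    pack ω₂ (lt_trans hω1 hω12) hω2
  obtain ⟨lam₂, x₂, hlam₂0, hx₂0, hx₂ne, hx₂eq, hcw₂⟩ :=
    perron hm hn (Hsor A α β s k ω₂) hH₂nn
  obtain ⟨lam₁, x₁, hlam₁0, hx₁0, hx₁ne, hx₁eq, hcw₁⟩ :=
    perron hm hn (Hsor A α β s k ω₁) hH₁nn
  have heig₂ : IsEigenvalue (Hsor A α β s k ω₂) (lam₂:ℂ) :=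
    real_eigen _ hx₂ne hx₂eq
  have hlam₂1 : lam₂ < 1 := by
    have h1 := hbound₂ _ heig₂
    rw [Complex.norm_real, Real.norm_eq_abs, abs_of_nonneg hlam₂0] at h1
    linarith
  -- the eigen equation for ω₂ in E/F form
  have hx₂eq' : tmul (Hsor A α β s k ω₂) x₂ = lam₂ • (fun j => x₂ j ^ (m-1)) := by
    funext i
    rw [hx₂eq i]
    simp
  have h1 : W₂.mulVec ((1 - ω₂) • (DmMat A α β s k).mulVec (fun i => x₂ i ^ (m-1))
      + ω₂ • tmul (Fab A α β s k) x₂) = lam₂ • (fun j => x₂ j ^ (m-1)) := by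
    rw [← hform₂ x₂, hx₂eq']
  have h2 : (1 - ω₂) • (DmMat A α β s k).mulVec (fun i => x₂ i ^ (m-1))
      + ω₂ • tmul (Fab A α β s k) x₂
      = (DmMat A α β s k - ω₂ • LtMat A α β s k).mulVec
          (lam₂ • (fun j => x₂ j ^ (m-1))) := by
    calc (1 - ω₂) • (DmMat A α β s k).mulVec (fun i => x₂ i ^ (m-1))
        + ω₂ • tmul (Fab A α β s k) x₂
        = (DmMat A α β s k - ω₂ • LtMat A α β s k).mulVec
            (W₂.mulVec ((1 - ω₂) • (DmMat A α β s k).mulVec (fun i => x₂ i ^ (m-1))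
              + ω₂ • tmul (Fab A α β s k) x₂)) := (hW₂inv2 _).symm
      _ = _ := by rw [h1]
  rw [Matrix.mulVec_smul, Matrix.sub_mulVec, Matrix.smul_mulVec] at h2
  have hueq : ∀ j, (1 - ω₂) * (DmMat A α β s k).mulVec (fun i => x₂ i ^ (m-1)) j
      + ω₂ * tmul (Fab A α β s k) x₂ j
      = lam₂ * ((DmMat A α β s k).mulVec (fun i => x₂ i ^ (m-1)) j
          - ω₂ * (LtMat A α β s k).mulVec (fun i => x₂ i ^ (m-1)) j) := by
    intro j
    have h3 := congrFun h2 j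
    simp only [Pi.add_apply, Pi.smul_apply, Pi.sub_apply, smul_eq_mul] at h3
    linarith
  have hDv₂ : ∀ j, 0 ≤ (DmMat A α β s k).mulVec (fun i => x₂ i ^ (m-1)) j :=
    mulVec_nonneg hDm_nn (fun i => pow_nonneg (hx₂0 i) _)
  -- transfer to ω₁
  have htrans : ∀ i, lam₂ * x₂ i ^ (m-1) ≤ tmul (Hsor A α β s k ω₁) x₂ i := by
    intro i
    rw [hform₁ x₂]
    have h4 : lam₂ * x₂ i ^ (m-1)
        = W₁.mulVec ((DmMat A α β s k - ω₁ • LtMat A α β s k).mulVec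
            (lam₂ • (fun j => x₂ j ^ (m-1)))) i := by
      rw [hW₁inv1]
      simp
    rw [h4]
    apply mulVec_mono hW₁nn
    intro j
    rw [Matrix.mulVec_smul, Matrix.sub_mulVec, Matrix.smul_mulVec]
    simp only [Pi.add_apply, Pi.smul_apply, Pi.sub_apply, smul_eq_mul]
    have hE := hueq j
    have hP : 0 ≤ (ω₂ - ω₁) * ((1 - lam₂)
        * (DmMat A α β s k).mulVec (fun i => x₂ i ^ (m-1)) j) :=
      mul_nonneg (by linarith) (mul_nonneg (by linarith) (hDv₂ j))
    have hkey : ω₂ * (((1 - ω₁) * (DmMat A α β s k).mulVec (fun i => x₂ i ^ (m-1)) j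
          + ω₁ * tmul (Fab A α β s k) x₂ j)
        - lam₂ * ((DmMat A α β s k).mulVec (fun i => x₂ i ^ (m-1)) j
          - ω₁ * (LtMat A α β s k).mulVec (fun i => x₂ i ^ (m-1)) j))
        = ω₁ * (((1 - ω₂) * (DmMat A α β s k).mulVec (fun i => x₂ i ^ (m-1)) j
          + ω₂ * tmul (Fab A α β s k) x₂ j)
        - lam₂ * ((DmMat A α β s k).mulVec (fun i => x₂ i ^ (m-1)) j
          - ω₂ * (LtMat A α β s k).mulVec (fun i => x₂ i ^ (m-1)) j))
        + (ω₂ - ω₁) * ((1 - lam₂)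
          * (DmMat A α β s k).mulVec (fun i => x₂ i ^ (m-1)) j) := by
      ring
    have h5 : 0 ≤ ω₂ * (((1 - ω₁) * (DmMat A α β s k).mulVec (fun i => x₂ i ^ (m-1)) j
          + ω₁ * tmul (Fab A α β s k) x₂ j)
        - lam₂ * ((DmMat A α β s k).mulVec (fun i => x₂ i ^ (m-1)) j
          - ω₁ * (LtMat A α β s k).mulVec (fun i => x₂ i ^ (m-1)) j)) := by
      rw [hkey]
      nlinarith [hE, hP]
    have hω₂0 : 0 < ω₂ := lt_trans hω1 hω12
    nlinarith [h5, hω₂0]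
  have hle₁ : lam₂ ≤ lam₁ := hcw₁ lam₂ x₂ hx₂0 hx₂ne htrans
  have hrho₂ : rho (Hsor A α β s k ω₂) ≤ lam₂ := by
    apply Real.sSup_le _ hlam₂0
    rintro r ⟨mu, hmu, rfl⟩
    obtain ⟨z, hz0, hzne, hz⟩ := eig_abs_bound _ hH₂nn hmu
    exact hcw₂ _ z hz0 hzne hz
  have heig₁ : IsEigenvalue (Hsor A α β s k ω₁) (lam₁:ℂ) :=
    real_eigen _ hx₁ne hx₁eq
  have hrho₁ : lam₁ ≤ rho (Hsor A α β s k ω₁) := by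
    have h6 := le_rho _ hbound₁ heig₁
    rwa [Complex.norm_real, Real.norm_eq_abs, abs_of_nonneg hlam₁0] at h6
  linarith

end

end MultilinearPaper
end

section
/- Let 𝒜 be an m-order n-dimensional strong M-tensor with a_{ii…i} = 1 for all i, and suppose a_{i(i+1)…(i+1)} a_{(i+1)i…i} > 0 for i = 1,…,n−1 and 0 < a_{i1…1} a_{1i…i} < 1 for i = 2,…,n. Then for every ω with 0 < ω < 1, the SOR iteration tensor ℋ(ω) = M(𝓘 − ω𝓛)^{−1}((1−ω)𝓘 + ω𝓕) is nonnegative and irreducible. -/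
open scoped BigOperators

namespace MultilinearPaper

noncomputable section

variable {m n : ℕ}

lemma aux_pow_lower {n : ℕ} (N : Matrix (Fin n) (Fin n) ℝ)
    (h : ∀ i j : Fin n, (i : ℕ) ≤ (j : ℕ) → N i j = 0) :
    ∀ (k : ℕ) (i j : Fin n), (i : ℕ) < (j : ℕ) + k → (N ^ k) i j = 0 := by
  intro k
  induction k with
  | zero =>
    intro i j h'
    simp only [Nat.add_zero] at h'
    rw [pow_zero, Matrix.one_apply_ne (by intro he; subst he; omega)]
  | succ k ih =>
    intro i j h'
    rw [pow_succ', Matrix.mul_apply]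
    apply Finset.sum_eq_zero
    intro c _
    by_cases hc : (i : ℕ) ≤ (c : ℕ)
    · rw [h i c hc, zero_mul]
    · rw [ih c j (by omega), mul_zero]

lemma aux_pow_nonneg {n : ℕ} (N : Matrix (Fin n) (Fin n) ℝ)
    (h : ∀ i j : Fin n, 0 ≤ N i j) (k : ℕ) : ∀ i j : Fin n, 0 ≤ (N ^ k) i j := by
  induction k with
  | zero =>
    intro i j
    rw [pow_zero, Matrix.one_apply]
    split <;> norm_num
  | succ k ih =>
    intro i j
    rw [pow_succ, Matrix.mul_apply]
    exact Finset.sum_nonneg fun c _ => mul_nonneg (ih i c) (h c j)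

lemma aux_nat_boundary (P : ℕ → Prop) (a b : ℕ) (hab : a < b) (ha : P a) (hb : ¬ P b) :
    ∃ j, a ≤ j ∧ j < b ∧ P j ∧ ¬ P (j + 1) := by
  by_contra hcon
  push_neg at hcon
  have key : ∀ k, a + k ≤ b → P (a + k) := by
    intro k
    induction k with
    | zero => intro _; simpa using ha
    | succ k ih =>
      intro hk
      have hpk := ih (by omega)
      by_contra hnk
      exact hnk (hcon (a + k) (by omega) (by omega) hpk)
  have := key (b - a) (by omega)
  rw [Nat.add_sub_cancel' (le_of_lt hab)] at this
  exact hb this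

theorem stmt16 {m n : ℕ} (hm : 2 ≤ m) (hn : 1 ≤ n)
    (A : Tensor m n) (hA : StrongM A) (hdiag : UnitDiag A)
    (hpos : ∀ (i : Fin n) (h : (i : ℕ) + 1 < n),
      0 < maj A i (finShiftUp i 1 h) * maj A (finShiftUp i 1 h) i)
    (hcol : ∀ i : Fin n, 1 ≤ (i : ℕ) →
      0 < maj A i ⟨0, hn⟩ * maj A ⟨0, hn⟩ i ∧ maj A i ⟨0, hn⟩ * maj A ⟨0, hn⟩ i < 1)
    (ω : ℝ) (hω0 : 0 < ω) (hω1 : ω < 1) :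
    TNonneg (Hu A ω) ∧ ¬ TReducible (Hu A ω) := by
  classical
  have hm1 : 0 < m - 1 := by omega
  have hne : Nonempty (Fin (m - 1)) := ⟨⟨0, hm1⟩⟩
  -- evaluation of idT at constant multi-indices
  have hid : ∀ i c : Fin n, idT m n i (fun _ => c) = if c = i then 1 else 0 := by
    intro i c
    simp only [idT]
    by_cases h : c = i
    · simp [h]
    · simp [h]
  -- off-diagonal entries of A are nonpositive
  obtain ⟨η, B, hB, hρ, hAeq⟩ := hA
  have hoff : ∀ (i : Fin n) (f : Fin (m - 1) → Fin n),
      ¬ (∀ t, f t = i) → A i f ≤ 0 := by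
    intro i f hf
    have : A i f = η * idT m n i f - B i f := by rw [hAeq]; rfl
    rw [this, idT, if_neg hf]
    have := hB i f
    linarith
  -- Lmat facts
  have hLnn : ∀ i j : Fin n, 0 ≤ Lmat A i j := by
    intro i j
    simp only [Lmat]
    split
    · rename_i hji
      have : j ≠ i := by intro he; subst he; omega
      have := hoff i (fun _ => j) (fun hall => this (hall ⟨0, hm1⟩))
      simp only [maj]
      linarith
    · exact le_refl 0
  have hLlow : ∀ i j : Fin n, (i : ℕ) ≤ (j : ℕ) → Lmat A i j = 0 := by
    intro i j h
    simp only [Lmat]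
    rw [if_neg (by omega)]
  -- Ltens evaluation
  have hLt : ∀ (i : Fin n) f, Ltens A i f = ∑ j, Lmat A i j * idT m n j f :=
    fun i f => rfl
  have hLtconst : ∀ i c : Fin n, Ltens A i (fun _ => c) = Lmat A i c := by
    intro i c
    rw [hLt]
    have : ∀ j : Fin n, Lmat A i j * idT m n j (fun _ => c)
        = if c = j then Lmat A i j else 0 := by
      intro j
      rw [hid]
      split <;> simp
    simp_rw [this]
    simp
  -- Ftens evaluation and nonnegativity
  have hFt : ∀ (i : Fin n) f, Ftens A i f = idT m n i f - Ltens A i f - A i f :=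
    fun i f => rfl
  have hFdiag : ∀ c : Fin n, Ftens A c (fun _ => c) = 0 := by
    intro c
    rw [hFt, hid, hLtconst, hLlow c c (le_refl _), hdiag c]
    simp
  have hFup : ∀ i j : Fin n, (i : ℕ) < (j : ℕ) →
      Ftens A i (fun _ => j) = -(maj A i j) := by
    intro i j hij
    have hji : j ≠ i := by intro he; subst he; omega
    rw [hFt, hid, if_neg hji, hLtconst]
    simp only [Lmat, maj]
    rw [if_neg (by omega)]
    ring
  have hFnn : ∀ (i : Fin n) f, 0 ≤ Ftens A i f := by
    intro i f
    by_cases hc : ∃ c, ∀ t, f t = c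
    · obtain ⟨c, hcf⟩ := hc
      have hfc : f = fun _ => c := funext hcf
      rw [hfc]
      by_cases hci : c = i
      · subst hci
        rw [hFdiag]
      · rcases lt_trichotomy (c : ℕ) (i : ℕ) with hlt | heq | hgt
        · rw [hFt, hid, if_neg hci, hLtconst]
          simp only [Lmat, maj]
          rw [if_pos hlt]
          ring_nf
          exact le_refl 0
        · exact absurd (Fin.ext heq) hci
        · rw [hFup i c hgt]
          have : c ≠ i := hci
          have := hoff i (fun _ => c) (fun hall => hci (hall ⟨0, hm1⟩))
          simp only [maj]
          linarith
    · push_neg at hc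
      have h1 : idT m n i f = 0 := by
        rw [idT, if_neg]
        intro hall
        obtain ⟨t, ht⟩ := hc i
        exact ht (hall t)
      have h2 : Ltens A i f = 0 := by
        rw [hLt]
        apply Finset.sum_eq_zero
        intro j _
        have : idT m n j f = 0 := by
          rw [idT, if_neg]
          intro hall
          obtain ⟨t, ht⟩ := hc j
          exact ht (hall t)
        rw [this, mul_zero]
      rw [hFt, h1, h2]
      have := hoff i f (fun hall => (hc i).elim fun t ht => ht (hall t))
      linarith
  -- the matrix M = maj (idT - ω • Ltens A) equals 1 - ω • Lmat A
  set N : Matrix (Fin n) (Fin n) ℝ := ω • Lmat A with hN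
  have hM : maj (idT m n - ω • Ltens A) = 1 - N := by
    funext i j
    show (idT m n - ω • Ltens A) i (fun _ => j) = (1 - N) i j
    have : (idT m n - ω • Ltens A) i (fun _ => j)
        = idT m n i (fun _ => j) - ω * Ltens A i (fun _ => j) := rfl
    rw [this, hid, hLtconst]
    simp only [Matrix.sub_apply, Matrix.one_apply, hN, Matrix.smul_apply, smul_eq_mul]
    by_cases h : i = j
    · subst h; simp
    · rw [if_neg h, if_neg (fun he => h he.symm)]
  have hNlow : ∀ i j : Fin n, (i : ℕ) ≤ (j : ℕ) → N i j = 0 := by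
    intro i j h
    simp [hN, Matrix.smul_apply, hLlow i j h]
  have hNnn : ∀ i j : Fin n, 0 ≤ N i j := by
    intro i j
    simp only [hN, Matrix.smul_apply, smul_eq_mul]
    exact mul_nonneg (le_of_lt hω0) (hLnn i j)
  set Minv : Matrix (Fin n) (Fin n) ℝ := ∑ k ∈ Finset.range n, N ^ k with hMinv
  have hpowN : N ^ n = 0 := by
    ext i j
    rw [aux_pow_lower N hNlow n i j (by omega)]
    rfl
  have hMul : maj (idT m n - ω • Ltens A) * Minv = 1 := by
    rw [hM, hMinv]
    have h1 : (N - 1) * ∑ k ∈ Finset.range n, N ^ k = N ^ n - 1 :=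
      mul_geom_sum N n
    rw [← neg_sub N 1, neg_mul, h1, hpowN]
    simp
  have hinv : (maj (idT m n - ω • Ltens A))⁻¹ = Minv :=
    Matrix.inv_eq_right_inv hMul
  have hMinvE : ∀ i j : Fin n, Minv i j = ∑ k ∈ Finset.range n, (N ^ k) i j := by
    intro i j
    rw [hMinv]
    simp [Matrix.sum_apply]
  have hMinv_nn : ∀ i j : Fin n, 0 ≤ Minv i j := by
    intro i j
    rw [hMinvE]
    exact Finset.sum_nonneg fun k _ => aux_pow_nonneg N hNnn k i j
  have hMinv_diag : ∀ i : Fin n, 1 ≤ Minv i i := by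
    intro i
    rw [hMinvE]
    have h0 : (N ^ 0) i i = 1 := by rw [pow_zero, Matrix.one_apply_eq]
    calc (1 : ℝ) = (N ^ 0) i i := h0.symm
      _ ≤ ∑ k ∈ Finset.range n, (N ^ k) i i :=
        Finset.single_le_sum (fun k _ => aux_pow_nonneg N hNnn k i i)
          (Finset.mem_range.mpr (by omega))
  -- the right-hand tensor
  set T : Tensor m n := (1 - ω) • idT m n + ω • Ftens A with hT
  have hTE : ∀ (i : Fin n) f, T i f = (1 - ω) * idT m n i f + ω * Ftens A i f :=
    fun i f => rfl
  have hTnn : ∀ (i : Fin n) f, 0 ≤ T i f := by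
    intro i f
    rw [hTE]
    have : 0 ≤ idT m n i f := by rw [idT]; split <;> norm_num
    have := hFnn i f
    nlinarith
  -- evaluation of Hu
  have hHu : ∀ (i : Fin n) f, Hu A ω i f = ∑ j₂, Minv i j₂ * T j₂ f := by
    intro i f
    show ∑ j₂, (maj (idT m n - ω • Ltens A))⁻¹ i j₂ * T j₂ f = _
    rw [hinv]
  have hHnn : TNonneg (Hu A ω) := by
    intro i f
    rw [hHu]
    exact Finset.sum_nonneg fun j₂ _ => mul_nonneg (hMinv_nn i j₂) (hTnn j₂ f)
  refine ⟨hHnn, ?_⟩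
  -- irreducibility
  rintro ⟨I, ⟨a, haI⟩, hIproper, hIzero⟩
  -- positive entries of T at constants
  have hTdiag : ∀ c : Fin n, 0 < T c (fun _ => c) := by
    intro c
    rw [hTE, hid, if_pos rfl, hFdiag c]
    simp
    linarith
  -- both adjacent majorization entries are negative
  have hadj : ∀ (i : Fin n) (h : (i : ℕ) + 1 < n),
      maj A i (finShiftUp i 1 h) < 0 ∧ maj A (finShiftUp i 1 h) i < 0 := by
    intro i h
    set j : Fin n := finShiftUp i 1 h with hj
    have hij : (i : ℕ) < (j : ℕ) := by simp [hj, finShiftUp]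
    have h1 : maj A i j ≤ 0 := by
      have : j ≠ i := by intro he; rw [he] at hij; omega
      have := hoff i (fun _ => j) (fun hall => this (hall ⟨0, hm1⟩))
      simpa [maj] using this
    have h2 : maj A j i ≤ 0 := by
      have : i ≠ j := by intro he; rw [he] at hij; omega
      have := hoff j (fun _ => i) (fun hall => this (hall ⟨0, hm1⟩))
      simpa [maj] using this
    have hprod : 0 < maj A i j * maj A j i := hpos i h
    constructor
    · rcases lt_or_eq_of_le h1 with h' | h'
      · exact h'
      · rw [h', zero_mul] at hprod; exact absurd hprod (lt_irrefl 0)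
    · rcases lt_or_eq_of_le h2 with h' | h'
      · exact h'
      · rw [h', mul_zero] at hprod; exact absurd hprod (lt_irrefl 0)
  -- edge i → i+1
  have edge_up : ∀ (i : Fin n) (h : (i : ℕ) + 1 < n),
      0 < Hu A ω i (fun _ => finShiftUp i 1 h) := by
    intro i h
    set j : Fin n := finShiftUp i 1 h with hj
    rw [hHu]
    have hterm : 0 < Minv i i * T i (fun _ => j) := by
      apply mul_pos (lt_of_lt_of_le one_pos (hMinv_diag i))
      have hji : j ≠ i := by
        intro he
        have : (j : ℕ) = (i : ℕ) := by rw [he]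
        simp [hj, finShiftUp] at this
      rw [hTE, hid, if_neg hji, hFup i j (by simp [hj, finShiftUp])]
      have := (hadj i h).1
      rw [← hj] at this
      nlinarith
    calc (0:ℝ) < Minv i i * T i (fun _ => j) := hterm
      _ ≤ ∑ j₂, Minv i j₂ * T j₂ (fun _ => j) :=
        Finset.single_le_sum
          (fun c _ => mul_nonneg (hMinv_nn i c) (hTnn c _)) (Finset.mem_univ i)
  -- edge i+1 → i
  have edge_dn : ∀ (i : Fin n) (h : (i : ℕ) + 1 < n),
      0 < Hu A ω (finShiftUp i 1 h) (fun _ => i) := by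
    intro i h
    set j : Fin n := finShiftUp i 1 h with hj
    rw [hHu]
    have hLpos : 0 < Lmat A j i := by
      have := (hadj i h).2
      rw [← hj] at this
      simp only [Lmat]
      rw [if_pos (by simp [hj, finShiftUp])]
      linarith
    have hMji : ω * Lmat A j i ≤ Minv j i := by
      rw [hMinvE]
      have h1 : (N ^ 1) j i = ω * Lmat A j i := by
        rw [pow_one, hN]; simp
      calc ω * Lmat A j i = (N ^ 1) j i := h1.symm
        _ ≤ ∑ k ∈ Finset.range n, (N ^ k) j i :=
          Finset.single_le_sum (fun k _ => aux_pow_nonneg N hNnn k j i)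
            (Finset.mem_range.mpr (by omega))
    have hterm : 0 < Minv j i * T i (fun _ => i) := by
      apply mul_pos _ (hTdiag i)
      calc (0:ℝ) < ω * Lmat A j i := mul_pos hω0 hLpos
        _ ≤ Minv j i := hMji
    calc (0:ℝ) < Minv j i * T i (fun _ => i) := hterm
      _ ≤ ∑ j₂, Minv j j₂ * T j₂ (fun _ => i) :=
        Finset.single_le_sum
          (fun c _ => mul_nonneg (hMinv_nn j c) (hTnn c _)) (Finset.mem_univ i)
  -- find a boundary pair
  obtain ⟨b, hbI⟩ := Set.ne_univ_iff_exists_notMem I |>.mp hIproper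
  set P : ℕ → Prop := fun k => ∃ h : k < n, (⟨k, h⟩ : Fin n) ∈ I with hP
  have hPa : P (a : ℕ) := ⟨a.isLt, by simpa using haI⟩
  have hPb : ¬ P (b : ℕ) := by
    rintro ⟨h, hmem⟩
    exact hbI (by simpa using hmem)
  have hab : (a : ℕ) ≠ (b : ℕ) := by
    intro he
    exact hPb (he ▸ hPa)
  rcases lt_or_gt_of_ne hab with hlt | hgt
  · obtain ⟨k, _, hkb, hPk, hPk1⟩ := aux_nat_boundary P a b hlt hPa hPb
    have hk : k < n := by omega
    have hk1 : k + 1 < n := by have := b.isLt; omega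
    obtain ⟨_, hkI⟩ := hPk
    have hk1I : (⟨k + 1, hk1⟩ : Fin n) ∉ I := fun hmem => hPk1 ⟨hk1, hmem⟩
    have hzero := hIzero ⟨k, hk⟩ (fun _ => finShiftUp ⟨k, hk⟩ 1 hk1)
      hkI (fun _ => hk1I)
    have := edge_up ⟨k, hk⟩ hk1
    rw [hzero] at this
    exact lt_irrefl 0 this
  · obtain ⟨k, _, hka, hPk, hPk1⟩ :=
      aux_nat_boundary (fun k => ¬ P k) b a hgt hPb (not_not_intro hPa)
    have hk : k < n := by have := a.isLt; omega
    have hk1 : k + 1 < n := by have := a.isLt; omega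
    have hkI : (⟨k, hk⟩ : Fin n) ∉ I := fun hmem => hPk ⟨hk, hmem⟩
    have hk1I : (⟨k + 1, hk1⟩ : Fin n) ∈ I := by
      rcases not_not.mp hPk1 with ⟨h, hmem⟩
      exact hmem
    have hzero := hIzero (finShiftUp ⟨k, hk⟩ 1 hk1) (fun _ => (⟨k, hk⟩ : Fin n))
      hk1I (fun _ => hkI)
    have := edge_dn ⟨k, hk⟩ hk1
    rw [hzero] at this
    exact lt_irrefl 0 this

end

end MultilinearPaper
end
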